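/- arXiv:1409.5396 — 6 statements merged into one kernel-verified Lean document; each statement's English description precedes it below -/
import Mathlib

section
/- For every s ≥ 1 and every tuple (r_1,…,r_s) ∈ ℕ^s with ∑_{j=1}^s r_j = s+1 and ∑_{j=1}^s j·r_j = 2s, the number of rooted ordered (plane) trees t with exactly s+1 vertices satisfying r_j(t) = r_j for all j ∈ {1,…,s} equals 2·s!/(r_1!·r_2!⋯r_s!). -/
/-- Rooted ordered (plane) trees: a root together with a finite ordered list of subtrees. -/
inductive PlaneTree where
  | node : List PlaneTree → PlaneTree

/-- Number of vertices of a plane tree. -/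
def PlaneTree.size : PlaneTree → ℕ
  | .node l => 1 + (l.attach.map (fun t => PlaneTree.size t.1)).sum
decreasing_by
  have := List.sizeOf_lt_of_mem t.2
  simp only [PlaneTree.node.sizeOf_spec]; omega

/-- Number of vertices of degree `j` in a subtree all of whose vertices are non-root
(the degree of a non-root vertex is its number of children plus one). -/
def PlaneTree.degCountNonRoot (j : ℕ) : PlaneTree → ℕ
  | .node l => (if l.length + 1 = j then 1 else 0)
      + (l.attach.map (fun t => PlaneTree.degCountNonRoot j t.1)).sum
decreasing_by
  have := List.sizeOf_lt_of_mem t.2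
  simp only [PlaneTree.node.sizeOf_spec]; omega

/-- Number of vertices of degree `j` in a rooted plane tree
(the degree of the root is its number of children). -/
def PlaneTree.degCount (j : ℕ) : PlaneTree → ℕ
  | .node l => (if l.length = j then 1 else 0)
      + (l.attach.map (fun t => PlaneTree.degCountNonRoot j t.1)).sum

/-!
Encode a tree by the preorder list of the numbers of children of its vertices. Removing the root
letter `d + 1`, the trees whose root has degree `d + 1` correspond to the words of length `s` over
`{0, …, s - 1}` that code forests of `d + 1` trees and in which the letter `j` occurs
`r_{j+1} - [j = d]` times (a non-root vertex with `j` children has degree `j + 1`). By the cycle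
lemma exactly `d + 1` of the `s` rotations of such a word code a forest, so these trees are
`(d + 1) / s` of the `s! r_{d+1} / ∏ r_j!` words with these multiplicities. Summing over `d` with
`∑ (d + 1) r_{d+1} = 2 s` gives `2 s! / ∏ r_j!`.
-/

open Finset
open scoped Nat

theorem count_ofFn_val {n m : ℕ} (f : Fin n → Fin m) (j : Fin m) :
    (List.ofFn fun i => (f i : ℕ)).count (j : ℕ) = Fintype.card {i // f i = j} := by
  rw [Fintype.card_subtype, ← Multiset.coe_count, ← Fin.univ_val_map, Multiset.count_map]
  simp [Fin.val_inj, eq_comm, card_def]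

namespace PlaneTree

@[induction_eliminator]
theorem node_induction {P : PlaneTree → Prop} (node : ∀ l, (∀ t ∈ l, P t) → P (node l)) :
    ∀ t, P t
  | .node l => node l fun u _ => node_induction node u
decreasing_by
  have := List.sizeOf_lt_of_mem ‹u ∈ l›
  simp only [PlaneTree.node.sizeOf_spec]; omega

/-- The preorder list of the numbers of children of the vertices (the Łukasiewicz word). -/
def code : PlaneTree → List ℕ
  | .node l => l.length :: (l.attach.map fun t => code t.1).flatten
decreasing_by
  have := List.sizeOf_lt_of_mem t.2
  simp only [PlaneTree.node.sizeOf_spec]; omega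

def forestCode (l : List PlaneTree) : List ℕ := (l.map code).flatten

@[simp] theorem forestCode_nil : forestCode [] = [] := rfl

@[simp] theorem forestCode_cons (t : PlaneTree) (l : List PlaneTree) :
    forestCode (t :: l) = code t ++ forestCode l := rfl

theorem forestCode_append (l l' : List PlaneTree) :
    forestCode (l ++ l') = forestCode l ++ forestCode l' := by
  simp [forestCode]

theorem code_node (l : List PlaneTree) : code (node l) = l.length :: forestCode l := by
  rw [code, forestCode, List.map_attach_eq_pmap, List.pmap_eq_map]

theorem size_node (l : List PlaneTree) : size (node l) = 1 + (l.map size).sum := by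
  rw [size, List.map_attach_eq_pmap, List.pmap_eq_map]

theorem degCountNonRoot_node (j : ℕ) (l : List PlaneTree) :
    degCountNonRoot j (node l) =
      (if l.length + 1 = j then 1 else 0) + (l.map (degCountNonRoot j)).sum := by
  rw [degCountNonRoot, List.map_attach_eq_pmap, List.pmap_eq_map]

theorem length_code (t : PlaneTree) : (code t).length = t.size := by
  induction t with
  | node l ih =>
    rw [code_node, size_node, List.length_cons, add_comm, forestCode, List.length_flatten,
      List.map_map]
    congr 2
    exact List.map_congr_left ih

theorem count_code (j : ℕ) (t : PlaneTree) : (code t).count j = degCountNonRoot (j + 1) t := by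
  induction t with
  | node l ih =>
    rw [code_node, degCountNonRoot_node, List.count_cons, forestCode, List.count_flatten,
      List.map_map, List.map_congr_left (f := List.count j ∘ code) (g := degCountNonRoot (j + 1)) ih]
    simp only [beq_iff_eq, add_left_inj]
    omega

theorem size_node_eq (l : List PlaneTree) : size (node l) = (forestCode l).length + 1 := by
  rw [← length_code, code_node, List.length_cons]

theorem degCount_succ_node (j : ℕ) (l : List PlaneTree) :
    degCount (j + 1) (node l) = (if l.length = j + 1 then 1 else 0) + (forestCode l).count j := by
  rw [degCount, List.map_attach_eq_pmap, List.pmap_eq_map, forestCode, List.count_flatten,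
    List.map_map]
  congr 2
  exact List.map_congr_left fun t _ => (count_code j t).symm

/-- `IsForestCode k w` says that `w` is the concatenation of the codes of `k` trees: reading the
letter `c` completes the root of the next of the `k` pending trees and adds its `c` children to
the pending ones. -/
inductive IsForestCode : ℕ → List ℕ → Prop
  | nil : IsForestCode 0 []
  | cons {k c : ℕ} {w : List ℕ} : IsForestCode (k + c) w → IsForestCode (k + 1) (c :: w)

theorem IsForestCode.append {a b : ℕ} {u v : List ℕ} (hu : IsForestCode a u)
    (hv : IsForestCode b v) : IsForestCode (a + b) (u ++ v) := by
  induction hu with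
  | nil => simpa using hv
  | @cons k c w _ ih =>
    rw [show k + 1 + b = k + b + 1 by omega]
    exact .cons (by rwa [show k + b + c = k + c + b by omega])

theorem IsForestCode.sum_add_eq_length {k : ℕ} {w : List ℕ} (h : IsForestCode k w) :
    w.sum + k = w.length := by
  induction h with
  | nil => rfl
  | cons _ ih => simp only [List.sum_cons, List.length_cons]; omega

theorem IsForestCode.lt_length {k x : ℕ} {w : List ℕ} (h : IsForestCode k w) (hk : 0 < k)
    (hx : x ∈ w) : x < w.length := by
  have := List.le_sum_of_mem hx
  have := h.sum_add_eq_length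
  omega

theorem isForestCode_iff {k : ℕ} {w : List ℕ} :
    IsForestCode k w ↔ w.sum + k = w.length ∧ ∀ n < w.length, n < (w.take n).sum + k := by
  induction w generalizing k with
  | nil =>
    refine ⟨fun h => ⟨h.sum_add_eq_length, by simp⟩, fun ⟨h, _⟩ => ?_⟩
    obtain rfl : k = 0 := by simpa using h
    exact .nil
  | cons c w ih =>
    constructor
    · rintro (_ | @⟨k, _, _, h⟩)
      refine ⟨(IsForestCode.cons h).sum_add_eq_length, fun n hn => ?_⟩
      cases n with
      | zero => simp
      | succ n =>
        have := (ih.mp h).2 n (by simpa using hn)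
        simp only [List.take_succ_cons, List.sum_cons]
        omega
    · rintro ⟨hsum, hpre⟩
      obtain ⟨k, rfl⟩ : ∃ k', k = k' + 1 := Nat.exists_eq_add_one.mpr (by simpa using hpre 0)
      refine .cons (ih.mpr ⟨by simp only [List.sum_cons, List.length_cons] at hsum; omega,
        fun n hn => ?_⟩)
      have := hpre (n + 1) (by simpa using hn)
      simp only [List.take_succ_cons, List.sum_cons] at this
      omega

instance (k : ℕ) : DecidablePred (IsForestCode k) :=
  fun _ => decidable_of_iff _ isForestCode_iff.symm

theorem isForestCode_code (t : PlaneTree) : IsForestCode 1 (code t) := by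
  induction t with
  | node l ih =>
    suffices IsForestCode l.length (forestCode l) by
      rw [code_node]; exact .cons (by simpa using this)
    induction l with
    | nil => exact .nil
    | cons t l ihl =>
      simpa [add_comm] using (ih t List.mem_cons_self).append
        (ihl fun u hu => ih u (List.mem_cons_of_mem _ hu))

theorem isForestCode_forestCode (l : List PlaneTree) : IsForestCode l.length (forestCode l) := by
  induction l with
  | nil => exact .nil
  | cons t l ih => simpa [add_comm] using (isForestCode_code t).append ih

/-- Inverse of `forestCode`: read the word backwards, keeping the list of trees already built. -/
def decode (w : List ℕ) : List PlaneTree :=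
  w.foldr (fun c l => node (l.take c) :: l.drop c) []

@[simp] theorem decode_cons (c : ℕ) (w : List ℕ) :
    decode (c :: w) = node ((decode w).take c) :: (decode w).drop c := rfl

theorem decode_code_append (t : PlaneTree) (w : List ℕ) :
    decode (code t ++ w) = t :: decode w := by
  induction t generalizing w with
  | node l ih =>
    suffices decode (forestCode l ++ w) = l ++ decode w by
      simp [code_node, this]
    induction l with
    | nil => rfl
    | cons t l ihl =>
      rw [forestCode_cons, List.append_assoc, ih t List.mem_cons_self,
        ihl fun u hu => ih u (List.mem_cons_of_mem _ hu), List.cons_append]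

theorem decode_forestCode (l : List PlaneTree) : decode (forestCode l) = l := by
  induction l with
  | nil => rfl
  | cons t l ih => rw [forestCode_cons, decode_code_append, ih]

theorem IsForestCode.forestCode_decode {k : ℕ} {w : List ℕ} (h : IsForestCode k w) :
    forestCode (decode w) = w ∧ (decode w).length = k := by
  induction h with
  | nil => simp [decode]
  | @cons k c w _ ih =>
    have hc : c ≤ (decode w).length := by omega
    refine ⟨?_, by simp only [decode_cons, List.length_cons, List.length_drop]; omega⟩
    rw [decode_cons, forestCode_cons, code_node, List.length_take_of_le hc, List.cons_append,
      ← forestCode_append, List.take_append_drop, ih.1]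

theorem IsForestCode.exists_ofFn_eq {k n : ℕ} {w : List ℕ} (h : IsForestCode k w) (hk : 0 < k)
    (hn : w.length = n) : ∃ f : Fin n → Fin n, List.ofFn (fun i => (f i : ℕ)) = w := by
  subst hn
  exact ⟨fun i => ⟨w[i], h.lt_length hk (List.getElem_mem _)⟩, List.ofFn_getElem⟩

theorem size_degCount_node_iff {s : ℕ} (r : Fin s → ℕ) (l : List PlaneTree) :
    ((node l).size = s + 1 ∧ ∀ j : Fin s, (node l).degCount (j.1 + 1) = r j) ↔
      (forestCode l).length = s ∧
        ∀ j : Fin s, (if l.length = j.1 + 1 then 1 else 0) + (forestCode l).count (j : ℕ) = r j := by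
  simp only [size_node_eq, degCount_succ_node, add_left_inj]

/-- A tree is determined by the number `d + 1` of children of its root and the code `w` of the
forest of its subtrees; `w` is the word of a map `Fin s → Fin s`. -/
theorem card_eq_sum_card_isForestCode {s : ℕ} (hs : 0 < s) (r : Fin s → ℕ) :
    Nat.card {t : PlaneTree // t.size = s + 1 ∧ ∀ j : Fin s, t.degCount (j.1 + 1) = r j} =
      ∑ d : Fin s, Nat.card {f : Fin s → Fin s //
        (∀ j, Fintype.card {i // f i = j} + (if j = d then 1 else 0) = r j) ∧
          IsForestCode (d + 1) (List.ofFn fun i => (f i : ℕ))} := by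
  rw [← Nat.card_sigma]
  symm
  refine Nat.card_congr (Equiv.ofBijective
    (fun p => ⟨node (decode (List.ofFn fun i => (p.2.1 i : ℕ))), ?_⟩) ⟨?_, ?_⟩)
  · obtain ⟨d, f, hcount, hcode⟩ := p
    obtain ⟨hdecode, hlength⟩ := hcode.forestCode_decode
    refine (size_degCount_node_iff r _).mpr ⟨by simp [hdecode], fun j => ?_⟩
    rw [hdecode, hlength, count_ofFn_val, ← hcount j, add_comm]
    simp [Fin.ext_iff, eq_comm]
  · rintro ⟨d, f, hf⟩ ⟨d', f', hf'⟩ h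
    simp only [Subtype.mk.injEq, node.injEq] at h
    have hw := congrArg forestCode h
    rw [hf.2.forestCode_decode.1, hf'.2.forestCode_decode.1] at hw
    have hd := hf.2.forestCode_decode.2
    rw [h, hf'.2.forestCode_decode.2] at hd
    obtain rfl : d = d' := Fin.ext (by omega)
    obtain rfl : f = f' := funext fun i => Fin.ext (congrFun (List.ofFn_injective hw) i)
    rfl
  · rintro ⟨⟨l⟩, ht⟩
    obtain ⟨hlen, hcount⟩ := (size_degCount_node_iff r l).mp ht
    have hcode := isForestCode_forestCode l
    have hl : 0 < l.length := by
      rcases l with _ | _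
      · simp only [forestCode_nil, List.length_nil] at hlen; omega
      · simp
    have := hcode.sum_add_eq_length
    obtain ⟨f, hf⟩ := hcode.exists_ofFn_eq hl hlen
    refine ⟨⟨⟨l.length - 1, by omega⟩, f, fun j => ?_, ?_⟩, ?_⟩
    · rw [← count_ofFn_val, hf, ← hcount j, add_comm]
      congr 1
      simp only [Fin.ext_iff]
      split_ifs <;> omega
    · rwa [hf, Nat.sub_add_cancel hl]
    · simp [hf, decode_forestCode]

end PlaneTree

open PlaneTree

section CycleLemma

variable {Z : ℕ → ℤ}

def runningMin (Z : ℕ → ℤ) : ℕ → ℤ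
  | 0 => Z 0
  | m + 1 => min (runningMin Z m) (Z (m + 1))

theorem runningMin_le {j m : ℕ} (h : j ≤ m) : runningMin Z m ≤ Z j := by
  induction m with
  | zero =>
    obtain rfl := Nat.le_zero.mp h
    exact le_rfl
  | succ m ih =>
    rcases Nat.lt_or_ge j (m + 1) with hj | hj
    · exact (min_le_left _ _).trans (ih (by omega))
    · obtain rfl : j = m + 1 := by omega
      exact min_le_right _ _

theorem exists_runningMin_eq (m : ℕ) : ∃ j ≤ m, runningMin Z m = Z j := by
  induction m with
  | zero => exact ⟨0, le_rfl, rfl⟩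
  | succ m ih =>
    obtain ⟨j, hj, hZ⟩ := ih
    rcases le_total (runningMin Z m) (Z (m + 1)) with h | h
    · exact ⟨j, by omega, by rw [runningMin, min_eq_left h, hZ]⟩
    · exact ⟨m + 1, le_rfl, by rw [runningMin, min_eq_right h]⟩

theorem runningMin_succ (hstep : ∀ m, Z m - 1 ≤ Z (m + 1)) (m : ℕ) :
    runningMin Z (m + 1) = runningMin Z m - if Z (m + 1) < runningMin Z m then 1 else 0 := by
  have := runningMin_le (Z := Z) le_rfl (m := m)
  have := hstep m
  rw [runningMin]
  split_ifs <;> omega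

theorem card_filter_lt_runningMin (hstep : ∀ m, Z m - 1 ≤ Z (m + 1)) {a b : ℕ} (hab : a ≤ b) :
    (#{m ∈ Ico a b | Z (m + 1) < runningMin Z m} : ℤ) = runningMin Z a - runningMin Z b := by
  induction b, hab using Nat.le_induction with
  | base => simp
  | succ b hab ih =>
    rw [← insert_Ico_right_eq_Ico_add_one hab, filter_insert, runningMin_succ hstep]
    split_ifs with h
    · rw [card_insert_of_notMem (by simp), Nat.cast_succ, ih]; ring
    · rw [ih]; ring

variable {n k : ℕ}

theorem runningMin_add_period (hper : ∀ m, Z (m + n) = Z m - k) {m : ℕ} (hm : n ≤ m + 1) :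
    runningMin Z (m + n) = runningMin Z m - k := by
  obtain ⟨j, hj, hZj⟩ := exists_runningMin_eq (Z := Z) m
  obtain ⟨i, hi, hZi⟩ := exists_runningMin_eq (Z := Z) (m + n)
  have := runningMin_le (Z := Z) (show j + n ≤ m + n by omega)
  have := hper j
  rcases Nat.lt_or_ge i n with hin | hin
  · have := runningMin_le (Z := Z) (show i ≤ m by omega)
    omega
  · obtain ⟨i, rfl⟩ := Nat.exists_eq_add_of_le' hin
    have := hper i
    have := runningMin_le (Z := Z) (show i ≤ m by omega)
    omega

theorem forall_lt_iff_lt_runningMin (hper : ∀ m, Z (m + n) = Z m - k) (hn : 0 < n) (a : ℕ) :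
    (∀ t < n, Z (a + n) < Z (a + t)) ↔ Z (a + n) < runningMin Z (a + n - 1) := by
  refine ⟨fun h => ?_, fun h t ht => h.trans_le (runningMin_le (by omega))⟩
  -- Periodicity with drift `-k ≤ 0` pulls every earlier time into the window `[a, a + n)`.
  have key : ∀ q j, a ≤ j + q * n → j < a + n → Z (a + n) < Z j := by
    intro q
    induction q with
    | zero => intro j hj hjn; simpa [show a + (j - a) = j by omega] using h (j - a) (by omega)
    | succ q ih =>
      intro j hj hjn
      by_cases hja : a ≤ j
      · exact ih j (by nlinarith) hjn
      · have := ih (j + n) (by rw [Nat.succ_mul] at hj; omega) (by omega)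
        have := hper j
        omega
  obtain ⟨j, hj, hZ⟩ := exists_runningMin_eq (Z := Z) (a + n - 1)
  rw [hZ]
  exact key a j (by nlinarith) (by omega)

/-- **Cycle lemma** (Dvoretzky–Motzkin). -/
theorem card_filter_forall_lt [NeZero n] (hstep : ∀ m, Z m - 1 ≤ Z (m + 1))
    (hper : ∀ m, Z (m + n) = Z m - k) :
    #{a : Fin n | ∀ t < n, Z (a + n) < Z (a + t)} = k := by
  have hn := NeZero.pos n
  have hcard : #{a : Fin n | ∀ t < n, Z (a + n) < Z (a + t)} =
      #{m ∈ Ico (n - 1) (2 * n - 1) | Z (m + 1) < runningMin Z m} := by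
    refine card_nbij' (fun a => a + n - 1) (fun m => Fin.ofNat n (m + 1 - n)) ?_ ?_ ?_ ?_
    · intro a ha
      simp only [mem_coe, mem_filter, mem_univ, true_and, mem_Ico] at ha ⊢
      rw [forall_lt_iff_lt_runningMin hper hn] at ha
      exact ⟨⟨by omega, by omega⟩, by rwa [show a + n - 1 + 1 = a + n by omega]⟩
    · intro m hm
      simp only [mem_coe, mem_filter, mem_univ, true_and, mem_Ico] at hm ⊢
      rw [forall_lt_iff_lt_runningMin hper hn, Fin.val_ofNat, Nat.mod_eq_of_lt (by omega),
        show m + 1 - n + n = m + 1 by omega, Nat.add_sub_cancel]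
      exact hm.2
    · intro a _
      ext
      simp [show (a : ℕ) + n - 1 + 1 - n = a by omega]
    · intro m hm
      simp only [mem_coe, mem_filter, mem_Ico] at hm
      simp only [Fin.val_ofNat]
      rw [Nat.mod_eq_of_lt (by omega)]
      omega
  have hdrop := card_filter_lt_runningMin hstep (show n - 1 ≤ 2 * n - 1 by omega)
  rw [show 2 * n - 1 = n - 1 + n by omega, runningMin_add_period hper (by omega)] at hdrop
  rw [hcard, show 2 * n - 1 = n - 1 + n by omega]
  omega

end CycleLemma

theorem sum_filter_val_lt {n t : ℕ} (y : ℕ → ℕ) (ht : t ≤ n) :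
    ∑ j : Fin n with j.val < t, y j = ∑ i ∈ range t, y i := by
  rw [sum_filter, Fin.sum_univ_eq_sum_range (fun i => if i < t then y i else 0), ← sum_filter]
  congr 1
  ext i
  simp only [mem_filter, mem_range]
  omega

theorem card_filter_isForestCode_rotate {n k : ℕ} [NeZero n] (x : Fin n → ℕ)
    (hsum : ∑ i, x i + k = n) :
    #{a : Fin n | IsForestCode k (List.ofFn fun i => x (a + i))} = k := by
  set y : ℕ → ℕ := fun m => x (Fin.ofNat n m)
  have hy : ∀ a i : ℕ, y (a + i) = x (Fin.ofNat n a + Fin.ofNat n i) := fun a i => by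
    simp only [y]; congr 1; ext; simp [Fin.val_add]
  have hval : ∀ a : Fin n, Fin.ofNat n a = a := fun a => by ext; simp
  have hwindow : ∀ a : ℕ, ∑ i ∈ range n, y (a + i) = ∑ i, x i := fun a => by
    rw [← Fin.sum_univ_eq_sum_range]
    simp only [hy, hval]
    exact Equiv.sum_comp (Equiv.addLeft (Fin.ofNat n a)) x
  -- `Z` is the Łukasiewicz walk of the periodic extension of `x`.
  set Z : ℕ → ℤ := fun m => ∑ i ∈ range m, (y i : ℤ) - m
  have hstep : ∀ m, Z m - 1 ≤ Z (m + 1) := fun m => by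
    simp only [Z, sum_range_succ]; push_cast; omega
  have hper : ∀ m, Z (m + n) = Z m - k := fun m => by
    simp only [Z, sum_range_add]
    rw [← Nat.cast_sum (range n), hwindow, ← Nat.cast_sum]
    have : ((∑ i, x i : ℕ) : ℤ) + k = n := by exact_mod_cast hsum
    push_cast at this ⊢
    linarith
  refine Eq.trans ?_ (card_filter_forall_lt hstep hper)
  congr 1
  ext a
  simp only [mem_filter, mem_univ, true_and, isForestCode_iff, List.sum_ofFn, List.length_ofFn,
    List.sum_take_ofFn]
  have hprefix : ∀ t ≤ n, ∑ j : Fin n with j.val < t, x (a + j) = ∑ i ∈ range t, y (a + i) :=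
    fun t ht => by
      rw [← sum_filter_val_lt (fun i => y (a + i)) ht]
      simp only [hy, hval]
  rw [show ∑ i, x (a + i) = ∑ i, x i from Equiv.sum_comp (Equiv.addLeft a) x,
    and_iff_right hsum]
  refine forall_congr' fun t => imp_congr_right fun ht => ?_
  rw [hprefix t ht.le, hper]
  simp only [Z, sum_range_add, ← Nat.cast_sum]
  omega

theorem sum_card_filter_perm_apply {ι α : Type*} [Fintype ι] [Fintype α] (σ : ι → Equiv.Perm α)
    (p : α → Prop) [DecidablePred p] :
    ∑ x, #{i | p (σ i x)} = Fintype.card ι * #{x | p x} := by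
  simp only [card_filter]
  rw [sum_comm]
  simp_rw [Equiv.sum_comp (σ _) fun x => if p x then 1 else 0]
  rw [sum_const, card_univ, smul_eq_mul]

/-- Double counting over the rotations, using the cycle lemma. -/
theorem card_mul_card_filter_isForestCode {n m k : ℕ} [NeZero n] (P : (Fin n → Fin m) → Prop)
    [DecidablePred P] (hrot : ∀ f a, P f → P fun i => f (a + i))
    (hsum : ∀ f, P f → ∑ i, (f i : ℕ) + k = n) :
    n * #{f | P f ∧ IsForestCode k (List.ofFn fun i => (f i : ℕ))} = k * #{f | P f} := by
  let rotate (a : Fin n) : Equiv.Perm (Fin n → Fin m) :=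
    (Equiv.addLeft a).symm.arrowCongr (Equiv.refl _)
  have hrotate (a : Fin n) (f : Fin n → Fin m) : rotate a f = fun i => f (a + i) := rfl
  calc n * #{f | P f ∧ IsForestCode k (List.ofFn fun i => (f i : ℕ))}
      = ∑ f, #{a | P (rotate a f) ∧ IsForestCode k (List.ofFn fun i => (rotate a f i : ℕ))} := by
        have := sum_card_filter_perm_apply rotate
          fun f => P f ∧ IsForestCode k (List.ofFn fun i => (f i : ℕ))
        rwa [Fintype.card_fin, eq_comm] at this
    _ = ∑ f with P f, k := by
        rw [sum_filter]
        refine sum_congr rfl fun f _ => ?_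
        split_ifs with hf
        · simp only [hrotate, hrot f _ hf, true_and]
          exact card_filter_isForestCode_rotate _ (hsum f hf)
        · refine card_eq_zero.mpr (filter_eq_empty_iff.mpr fun a _ h => hf ?_)
          simpa [hrotate] using hrot _ (-a) h.1
    _ = k * #{f | P f} := by rw [sum_const, smul_eq_mul, mul_comm]

section Fibers

variable {α ι : Type*} [Fintype α] [DecidableEq ι]

theorem exists_perm_comp_eq {f g : α → ι}
    (h : ∀ i, Fintype.card {a // f a = i} = Fintype.card {a // g a = i}) :
    ∃ σ : Equiv.Perm α, g ∘ σ = f := by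
  have e (i : ι) : {a // f a = i} ≃ {a // g a = i} := Fintype.equivOfCardEq (h i)
  refine ⟨(Equiv.sigmaFiberEquiv f).symm.trans
    ((Equiv.sigmaCongrRight e).trans (Equiv.sigmaFiberEquiv g)), funext fun a => ?_⟩
  exact (e (f a) ⟨a, rfl⟩).2

theorem card_fiber_comp_perm (f : α → ι) (σ : Equiv.Perm α) (i : ι) :
    Fintype.card {a // f (σ a) = i} = Fintype.card {a // f a = i} :=
  Fintype.card_congr (σ.subtypeEquiv fun _ => Iff.rfl)

theorem exists_card_fiber_eq [Fintype ι] (g : ι → ℕ) (hg : ∑ i, g i = Fintype.card α) :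
    ∃ f : α → ι, ∀ i, Fintype.card {a // f a = i} = g i := by
  let e : α ≃ Σ i, Fin (g i) := Fintype.equivOfCardEq (by simp [hg])
  refine ⟨fun a => (e a).1, fun i => ?_⟩
  rw [Fintype.card_congr ((e.subtypeEquiv fun _ => Iff.rfl).trans (Equiv.sigmaSubtype i)),
    Fintype.card_fin]

variable [DecidableEq α] [Fintype ι]

/-- Orbit–stabilizer: the permutations of `α` act transitively on these maps, with stabilizers
of order `∏ i, (g i)!`. -/
theorem card_card_fiber_eq_mul_prod_factorial (g : ι → ℕ) (hg : ∑ i, g i = Fintype.card α) :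
    Fintype.card {f : α → ι // ∀ i, Fintype.card {a // f a = i} = g i} * ∏ i, (g i)! =
      (Fintype.card α)! := by
  obtain ⟨f₀, hf₀⟩ := exists_card_fiber_eq g hg
  let Φ (σ : Equiv.Perm α) : {f : α → ι // ∀ i, Fintype.card {a // f a = i} = g i} :=
    ⟨f₀ ∘ σ, fun i => (card_fiber_comp_perm f₀ σ i).trans (hf₀ i)⟩
  have hfiber (f : {f : α → ι // ∀ i, Fintype.card {a // f a = i} = g i}) :
      Fintype.card {σ // Φ σ = f} = ∏ i, (g i)! := by
    obtain ⟨σ, hσ⟩ := exists_perm_comp_eq (f := f.1) (g := f₀) fun i => by rw [f.2, hf₀]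
    have e : {τ // Φ τ = f} ≃ {τ : Equiv.Perm α // f.1 ∘ τ = f.1} :=
      (Equiv.mulLeft σ⁻¹).subtypeEquiv fun τ => by
        rw [Subtype.ext_iff, ← hσ]
        simp [Φ, Function.comp_def]
    rw [Fintype.card_congr e, DomMulAct.stabilizer_card]
    exact prod_congr rfl fun i _ => by rw [f.2]
  rw [← Fintype.card_perm, ← Fintype.card_congr (Equiv.sigmaFiberEquiv Φ), Fintype.card_sigma,
    sum_congr rfl fun f _ => hfiber f, sum_const, card_univ, smul_eq_mul]

end Fibers

theorem sum_val_eq_sum_mul_card_fiber {α : Type*} [Fintype α] {m : ℕ} (f : α → Fin m) :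
    ∑ a, (f a : ℕ) = ∑ j : Fin m, j * Fintype.card {a // f a = j} := by
  simp only [← sum_fiberwise' univ f (fun j => (j : ℕ)), sum_const, smul_eq_mul,
    Fintype.card_subtype, mul_comm]

theorem card_card_fiber_add_ite_mul_prod_factorial {α ι : Type*} [Fintype α] [DecidableEq α]
    [Fintype ι] [DecidableEq ι] (r : ι → ℕ) (hr : ∑ i, r i = Fintype.card α + 1) (d : ι) :
    Fintype.card {f : α → ι // ∀ i, Fintype.card {a // f a = i} + (if i = d then 1 else 0) = r i} *
      ∏ i, (r i)! = (Fintype.card α)! * r d := by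
  by_cases hd : r d = 0
  · have : IsEmpty {f : α → ι //
        ∀ i, Fintype.card {a // f a = i} + (if i = d then 1 else 0) = r i} :=
      ⟨fun f => by simpa [hd] using f.2 d⟩
    simp [hd]
  set g := Function.update r d (r d - 1)
  have hg (i : ι) : r i = g i + if i = d then 1 else 0 := by
    by_cases hi : i = d
    · subst hi
      simp only [g, Function.update_self, if_true]
      omega
    · simp [g, hi]
  have hgsum : ∑ i, g i = Fintype.card α := by
    simp only [hg, sum_add_distrib, sum_ite_eq', mem_univ, if_true] at hr
    omega
  have hprod : ∏ i, (r i)! = r d * ∏ i, (g i)! := by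
    rw [← mul_prod_erase univ (fun i => (r i)!) (mem_univ d),
      ← mul_prod_erase univ (fun i => (g i)!) (mem_univ d), ← mul_assoc]
    simp only [g, Function.update_self]
    rw [Nat.mul_factorial_pred hd]
    congr 1
    exact prod_congr rfl fun i hi => by rw [Function.update_of_ne (ne_of_mem_erase hi)]
  rw [Fintype.card_congr (Equiv.subtypeEquivRight
      (q := fun f => ∀ i, Fintype.card {a // f a = i} = g i) fun f => by simp only [hg, add_left_inj]),
    hprod, mul_left_comm, card_card_fiber_eq_mul_prod_factorial g hgsum, mul_comm]

theorem sum_val_add_succ_eq {s : ℕ} {r : Fin s → ℕ} (hsum : ∑ j, r j = s + 1) (hdeg : ∑ j, (j.1 + 1) * r j = 2 * s) (d : Fin s)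
    {f : Fin s → Fin s} (hf : ∀ j, Fintype.card {i // f i = j} + (if j = d then 1 else 0) = r j) :
    ∑ i, (f i : ℕ) + (d + 1) = s := by
  simp only [← hf, add_mul, one_mul, mul_add, sum_add_distrib, mul_ite, mul_one, mul_zero,
    sum_ite_eq', mem_univ, if_true, ← sum_val_eq_sum_mul_card_fiber] at hsum hdeg
  omega

theorem card_isForestCode_mul_prod_factorial {s : ℕ} [NeZero s] {r : Fin s → ℕ}
    (hsum : ∑ j, r j = s + 1) (hdeg : ∑ j, (j.1 + 1) * r j = 2 * s) (d : Fin s) :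
    s * Nat.card {f : Fin s → Fin s //
        (∀ j, Fintype.card {i // f i = j} + (if j = d then 1 else 0) = r j) ∧
          IsForestCode (d + 1) (List.ofFn fun i => (f i : ℕ))} * ∏ j, (r j)! =
      (d + 1) * r d * s ! := by
  have hrot (f : Fin s → Fin s) (a : Fin s)
      (hf : ∀ j, Fintype.card {i // f i = j} + (if j = d then 1 else 0) = r j) (j : Fin s) :
      Fintype.card {i // f (a + i) = j} + (if j = d then 1 else 0) = r j := by
    rw [← hf j, ← card_fiber_comp_perm f (Equiv.addLeft a)]
    rfl
  have hW := card_card_fiber_add_ite_mul_prod_factorial (α := Fin s) r (by simpa using hsum) d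
  rw [Fintype.card_fin] at hW
  rw [Nat.card_eq_fintype_card, Fintype.card_subtype, card_mul_card_filter_isForestCode _
    hrot (fun f hf => sum_val_add_succ_eq hsum hdeg d hf), mul_assoc,
    mul_assoc, mul_comm (r d), ← hW, Fintype.card_subtype]

/-- **Number of rooted ordered trees with a given degree distribution**:
for `(r_1,…,r_s)` with `∑ r_j = s+1` and `∑ j·r_j = 2s`, the number of plane trees with
`s+1` vertices and degree distribution `r` is `2·s!/(r_1!⋯r_s!)`. -/
theorem card_planeTrees_degree_distribution (s : ℕ) (hs : 1 ≤ s) (r : Fin s → ℕ)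
    (hsum : ∑ j, r j = s + 1) (hdeg : ∑ j, (j.1 + 1) * r j = 2 * s) :
    Nat.card {t : PlaneTree // t.size = s + 1 ∧ ∀ j : Fin s, t.degCount (j.1 + 1) = r j} =
      2 * Nat.factorial s / ∏ j, Nat.factorial (r j) := by
  have : NeZero s := ⟨by omega⟩
  refine (Nat.div_eq_of_eq_mul_left (prod_pos fun j _ => Nat.factorial_pos _) ?_).symm
  refine Nat.eq_of_mul_eq_mul_left hs ?_
  rw [card_eq_sum_card_isForestCode hs, sum_mul, mul_sum]
  simp_rw [← mul_assoc, card_isForestCode_mul_prod_factorial hsum hdeg]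
  rw [← sum_mul, hdeg]
  ring
end

section
/- For every s ≥ 1, the s-th Catalan number satisfies (s+1)·C_s = 2·∑_{(r_1,…,r_s) ∈ R_s} (s+1)!/(r_1!·r_2!⋯r_s!); equivalently, C_s = ∑_{(r_1,…,r_s) ∈ R_s} 2·s!/(r_1!⋯r_s!). Here C_s = Nat.catalan s and each term (s+1)!/(r_1!⋯r_s!) is the multinomial coefficient of the tuple (r_1,…,r_s) (which sums to s+1). -/
/-!
By the multinomial theorem, `∑_{r ∈ R_s} (s+1)!/∏ rⱼ!` is the coefficient of `x^(2s)` in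
`(x + x² + ⋯ + xˢ)^(s+1)`, i.e. of `x^(s-1)` in `(1 + x + ⋯ + x^(s-1))^(s+1)`. In that degree the
truncation is invisible, so this is the coefficient of `x^(s-1)` in `(1 - x)^(-(s+1))`, namely
`C(2s-1, s) = C(2s, s)/2 = (s+1)·C_s/2`.

Each summand `2·s!/∏ rⱼ!` of the second identity is exact: `rⱼ·(s+1)!/∏ rᵢ!` is `s+1` times a
multinomial coefficient, so `s+1` divides `(∑ j·rⱼ)·(s+1)!/∏ rᵢ! = 2s·(s+1)!/∏ rᵢ!`, and `s+1`
is coprime to `s`.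
-/

/-- The index set `R_s` of degree distributions of trees with `s` edges:
tuples `(r_1,…,r_s)` with `∑ r_j = s+1` and `∑ j·r_j = 2s`. -/
def Rset (s : ℕ) : Finset (Fin s → ℕ) :=
  (Finset.Nat.antidiagonalTuple s (s + 1)).filter (fun r => ∑ j, (j.1 + 1) * r j = 2 * s)

open Finset PowerSeries

namespace Nat

variable {α : Type*} {s : Finset α} {f : α → ℕ} {a : α}

theorem mul_multinomial_eq_sum_mul_multinomial_update [DecidableEq α] {k : ℕ} (ha : a ∈ s)
    (hk : f a = k + 1) :
    f a * multinomial s f = (∑ i ∈ s, f i) * multinomial s (Function.update f a k) := by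
  have ha' := notMem_erase a s
  have hrest : ∀ i ∈ s.erase a, Function.update f a k i = f i :=
    fun i hi => Function.update_of_ne (ne_of_mem_erase hi) _ _
  rw [← insert_erase ha, multinomial_insert ha', multinomial_insert ha', sum_insert ha',
    sum_congr rfl hrest, multinomial_congr hrest, Function.update_self, hk, ← mul_assoc,
    ← mul_assoc, add_right_comm, add_one_mul_choose_eq]
  ring

theorem sum_dvd_mul_multinomial (ha : a ∈ s) : ∑ i ∈ s, f i ∣ f a * multinomial s f := by
  classical
  rcases Nat.eq_zero_or_eq_succ_pred (f a) with h | h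
  · simp [h]
  · exact Dvd.intro _ (mul_multinomial_eq_sum_mul_multinomial_update ha h).symm

theorem sum_dvd_weighted_sum_mul_multinomial (w : α → ℕ) :
    ∑ i ∈ s, f i ∣ (∑ i ∈ s, w i * f i) * multinomial s f := by
  rw [sum_mul]
  exact dvd_sum fun i hi => by
    rw [mul_assoc]
    exact dvd_mul_of_dvd_right (sum_dvd_mul_multinomial hi) _

theorem mul_factorial_div_prod_factorial_mul_succ {n c : ℕ} (hsum : ∑ i ∈ s, f i = n + 1)
    (hdvd : n + 1 ∣ c * multinomial s f) :
    (c * n ! / ∏ i ∈ s, (f i)!) * (n + 1) = c * multinomial s f := by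
  obtain ⟨t, ht⟩ := hdvd
  have hprod : t * ∏ i ∈ s, (f i)! = c * n ! := by
    apply Nat.eq_of_mul_eq_mul_left (succ_pos n)
    calc (n + 1) * (t * ∏ i ∈ s, (f i)!) = c * ((∏ i ∈ s, (f i)!) * multinomial s f) := by
          rw [← mul_assoc, ← ht]; ring
      _ = (n + 1) * (c * n !) := by rw [multinomial_spec, hsum, factorial_succ]; ring
  rw [← hprod, Nat.mul_div_cancel _ (prod_factorial_pos s f), ht, mul_comm]

theorem centralBinom_succ_eq_two_mul_choose (m : ℕ) :
    centralBinom (m + 1) = 2 * (m + 1 + m).choose m := by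
  rw [centralBinom_eq_two_mul_choose, two_mul, ← add_assoc, choose_succ_succ', choose_symm_add,
    ← two_mul]

end Nat

namespace PowerSeries

variable {R : Type*}

theorem coeff_sum_X_pow_pow [CommSemiring R] {ι : Type*} [DecidableEq ι] (t : Finset ι)
    (w : ι → ℕ) (n m : ℕ) :
    coeff m ((∑ i ∈ t, (X : R⟦X⟧) ^ w i) ^ n) =
      ∑ r ∈ (piAntidiag t n).filter (fun r => ∑ i ∈ t, w i * r i = m),
        (Nat.multinomial t r : R) := by
  rw [sum_pow_eq_sum_piAntidiag, map_sum, sum_filter]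
  refine sum_congr rfl fun r _ => ?_
  rw [prod_congr rfl fun i _ => (pow_mul _ _ _).symm, prod_pow_eq_pow_sum, ← map_natCast C,
    coeff_C_mul_X_pow]
  simp only [@eq_comm _ m]

theorem coeff_coe_trunc_pow [CommSemiring R] {d k : ℕ} (hd : d < k) (f : R⟦X⟧) (a : ℕ) :
    coeff d ((trunc k f : R⟦X⟧) ^ a) = coeff d (f ^ a) := by
  have h := congrArg (Polynomial.coeff · d) (trunc_trunc_pow f k a)
  simp only [coeff_trunc, if_pos hd] at h
  exact h

theorem coeff_geom_sum_pow [CommRing R] {d k : ℕ} (hd : d < k) (n : ℕ) :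
    coeff d ((∑ j ∈ range k, (X : R⟦X⟧) ^ j) ^ (n + 1)) = ((n + d).choose n : R) := by
  have htrunc : ∑ j ∈ range k, (X : R⟦X⟧) ^ j = (trunc k (mk 1 : R⟦X⟧) : R⟦X⟧) := by
    ext m
    simp [coeff_trunc, coeff_X_pow]
  rw [htrunc, coeff_coe_trunc_pow hd, mk_one_pow_eq_mk_choose_add, coeff_mk]

end PowerSeries

theorem mem_Rset {s : ℕ} {r : Fin s → ℕ} :
    r ∈ Rset s ↔ ∑ j, r j = s + 1 ∧ ∑ j, (j.1 + 1) * r j = 2 * s := by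
  rw [Rset, mem_filter, Nat.mem_antidiagonalTuple]

theorem sum_multinomial_Rset_succ (m : ℕ) :
    ∑ r ∈ Rset (m + 1), Nat.multinomial univ r = (m + 1 + m).choose m := by
  have hX : ∑ j : Fin (m + 1), (X : ℤ⟦X⟧) ^ (j.1 + 1) = X * ∑ j ∈ range (m + 1), X ^ j := by
    rw [mul_sum, ← Fin.sum_univ_eq_sum_range]
    simp_rw [pow_succ']
  suffices h : (∑ r ∈ Rset (m + 1), Nat.multinomial univ r : ℤ) = (m + 1 + m).choose m by
    exact_mod_cast h
  calc (∑ r ∈ Rset (m + 1), Nat.multinomial univ r : ℤ)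
      = coeff (2 * (m + 1)) ((∑ j : Fin (m + 1), (X : ℤ⟦X⟧) ^ (j.1 + 1)) ^ (m + 2)) := by
        rw [coeff_sum_X_pow_pow, piAntidiag_univ_fin_eq_antidiagonalTuple]; rfl
    _ = coeff (m + (m + 2))
          (X ^ (m + 2) * (∑ j ∈ range (m + 1), (X : ℤ⟦X⟧) ^ j) ^ (m + 1 + 1)) := by
        rw [hX, mul_pow, show 2 * (m + 1) = m + (m + 2) by ring]
    _ = (m + 1 + m).choose m := by
        rw [coeff_X_pow_mul, coeff_geom_sum_pow (lt_add_one m), Nat.choose_symm_add]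

theorem succ_dvd_two_mul_multinomial_of_mem_Rset {s : ℕ} {r : Fin s → ℕ} (hr : r ∈ Rset s) :
    s + 1 ∣ 2 * Nat.multinomial univ r := by
  obtain ⟨hsum, hweight⟩ := mem_Rset.mp hr
  have h := Nat.sum_dvd_weighted_sum_mul_multinomial (s := univ) (f := r) (fun j => j.1 + 1)
  rw [hsum, hweight, mul_comm 2, mul_assoc, mul_comm] at h
  exact (Nat.coprime_self_add_left.mpr (Nat.coprime_one_left s)).dvd_of_dvd_mul_right h

/-- **A Catalan numbers identity**: `(s+1)·C_s = 2·∑_{r ∈ R_s} (s+1)!/(r_1!⋯r_s!)`;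
equivalently `C_s = ∑_{r ∈ R_s} 2·s!/(r_1!⋯r_s!)`. -/
theorem catalan_identity (s : ℕ) (hs : 1 ≤ s) :
    (s + 1) * catalan s = 2 * ∑ r ∈ Rset s, Nat.multinomial Finset.univ r ∧
    catalan s = ∑ r ∈ Rset s, 2 * Nat.factorial s / ∏ j, Nat.factorial (r j) := by
  obtain ⟨m, rfl⟩ : ∃ m, s = m + 1 := ⟨s - 1, by omega⟩
  have hfirst :
      (m + 1 + 1) * catalan (m + 1) = 2 * ∑ r ∈ Rset (m + 1), Nat.multinomial univ r := by
    rw [succ_mul_catalan_eq_centralBinom, sum_multinomial_Rset_succ,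
      Nat.centralBinom_succ_eq_two_mul_choose]
  refine ⟨hfirst, Nat.eq_of_mul_eq_mul_right (Nat.succ_pos (m + 1)) ?_⟩
  rw [sum_mul, sum_congr rfl fun r hr => Nat.mul_factorial_div_prod_factorial_mul_succ
    (mem_Rset.mp hr).1 (succ_dvd_two_mul_multinomial_of_mem_Rset hr), ← mul_sum, ← hfirst,
    mul_comm]
end

section
/- For n ≥ 1 and k ≥ 1, define on the real vector space of real symmetric n×n matrices the k-Schatten norm ‖A‖_k = (∑_{i=1}^n |λ_i(A)|^k)^{1/k}, where λ_1(A),…,λ_n(A) are the eigenvalues of A. Then: (i) A ↦ ‖A‖_k is a convex function on the space of real symmetric n×n matrices; (ii) if k ≥ 2, then for all real symmetric A, B: |‖A‖_k − ‖B‖_k| ≤ √2·(∑_{1≤i≤j≤n} (A_{ij} − B_{ij})²)^{1/2}; (iii) for k = 1, for all real symmetric A, B: |‖A‖_1 − ‖B‖_1| ≤ √(2n)·(∑_{1≤i≤j≤n} (A_{ij} − B_{ij})²)^{1/2}. -/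
/-!
For an orthogonal matrix `U`, the diagonal of `U A Uᵀ` is `(U ⊙ U) λ(A)`, the image of the
eigenvalue vector under a doubly stochastic matrix. By Birkhoff's theorem and the permutation
invariance of the `ℓ^k` norm, its `ℓ^k` norm is at most `‖λ(A)‖_k`, with equality when `U`
diagonalises `A`. Hence `‖A‖_k = max_U ‖diag (U A Uᵀ)‖_k` is a maximum of seminorms of `A`, so it is
subadditive and homogeneous: convex, and `|‖A‖_k - ‖B‖_k| ≤ ‖A - B‖_k`. Finally `‖M‖_k ≤ ‖M‖_2`
for `k ≥ 2` and `‖M‖_1 ≤ √n ‖M‖_2`, while `‖M‖_2² = ∑ᵢⱼ Mᵢⱼ² ≤ 2 ∑_{i ≤ j} Mᵢⱼ²` for symmetric `M`.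
-/

/-- Eigenvalues of a real matrix (meaningful when the matrix is symmetric/Hermitian). -/
noncomputable def eigsOf {n : ℕ} (M : Matrix (Fin n) (Fin n) ℝ) : Fin n → ℝ :=
  if h : M.IsHermitian then h.eigenvalues else 0

/-- The `k`-Schatten norm `‖A‖_k = (∑ |λ_i(A)|^k)^{1/k}` of a real symmetric matrix. -/
noncomputable def schatten {n : ℕ} (k : ℕ) (A : Matrix (Fin n) (Fin n) ℝ) : ℝ :=
  (∑ i : Fin n, |eigsOf A i| ^ k) ^ ((1 : ℝ) / k)

/-- Sum of squared differences over the diagonal and strictly-upper-triangular entries. -/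
def upperSq {n : ℕ} (A B : Matrix (Fin n) (Fin n) ℝ) : ℝ :=
  ∑ p ∈ Finset.univ.filter (fun p : Fin n × Fin n => p.1 ≤ p.2), (A p.1 p.2 - B p.1 p.2) ^ 2

open Finset Matrix
open scoped ENNReal

lemma PiLp.norm_toLp_comp_perm {ι : Type*} [Fintype ι] (p : ℝ≥0∞) [Fact (1 ≤ p)] (d : ι → ℝ)
    (σ : Equiv.Perm ι) : ‖WithLp.toLp p (d ∘ σ)‖ = ‖WithLp.toLp p d‖ :=
  (LinearIsometryEquiv.piLpCongrLeft p ℝ ℝ σ.symm).norm_map (WithLp.toLp p d)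

namespace Matrix

variable {ι : Type*} [Fintype ι] [DecidableEq ι]

lemma hadamard_self_mem_doublyStochastic {U : Matrix ι ι ℝ} (hU : U ∈ unitaryGroup ι ℝ) :
    U ⊙ U ∈ doublyStochastic ℝ ι := by
  have hrow := congrFun₂ (mem_unitaryGroup_iff.mp hU)
  have hcol := congrFun₂ (mem_unitaryGroup_iff'.mp hU)
  refine mem_doublyStochastic_iff_sum.mpr ⟨fun i j => mul_self_nonneg _, fun i => ?_, fun j => ?_⟩
  · simpa [mul_apply] using hrow i i
  · simpa [mul_apply] using hcol j j

lemma diag_mul_diagonal_mul_star (U : Matrix ι ι ℝ) (d : ι → ℝ) :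
    (U * diagonal d * star U).diag = (U ⊙ U) *ᵥ d := by
  ext i
  rw [diag_apply, mul_apply]
  simp only [mul_diagonal, star_apply, star_trivial, mulVec, dotProduct, hadamard_apply]
  exact sum_congr rfl fun j _ => by ring

lemma norm_toLp_mulVec_le_of_mem_doublyStochastic (p : ℝ≥0∞) [Fact (1 ≤ p)]
    {M : Matrix ι ι ℝ} (hM : M ∈ doublyStochastic ℝ ι) (d : ι → ℝ) :
    ‖WithLp.toLp p (M *ᵥ d)‖ ≤ ‖WithLp.toLp p d‖ := by
  let L : Matrix ι ι ℝ →ₗ[ℝ] PiLp p fun _ : ι => ℝ :=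
    (WithLp.linearEquiv p ℝ (ι → ℝ)).symm.toLinearMap ∘ₗ LinearMap.applyₗ d ∘ₗ
      Matrix.toLin'.toLinearMap
  rw [← SetLike.mem_coe, doublyStochastic_eq_convexHull_permMatrix] at hM
  obtain ⟨_, ⟨σ, rfl⟩, hσ⟩ :=
    (convexOn_univ_norm.comp_linearMap L).exists_ge_of_mem_convexHull (Set.subset_univ _) hM
  simpa [L, permMatrix_mulVec, PiLp.norm_toLp_comp_perm] using hσ

lemma IsHermitian.norm_toLp_diag_conj_le {A : Matrix ι ι ℝ} (hA : A.IsHermitian)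
    {U : Matrix ι ι ℝ} (hU : U ∈ unitaryGroup ι ℝ) (p : ℝ≥0∞) [Fact (1 ≤ p)] :
    ‖WithLp.toLp p (U * A * star U).diag‖ ≤ ‖WithLp.toLp p hA.eigenvalues‖ := by
  set V : Matrix ι ι ℝ := U * hA.eigenvectorUnitary
  have hV : V ∈ unitaryGroup ι ℝ := mul_mem hU hA.eigenvectorUnitary.2
  have hconj : U * A * star U = V * diagonal hA.eigenvalues * star V := by
    conv_lhs => rw [hA.spectral_theorem]
    simp [V, Unitary.conjStarAlgAut_apply, star_mul, mul_assoc]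
  rw [hconj, diag_mul_diagonal_mul_star]
  exact norm_toLp_mulVec_le_of_mem_doublyStochastic p (hadamard_self_mem_doublyStochastic hV) _

lemma IsHermitian.exists_diag_conj_eq_eigenvalues {A : Matrix ι ι ℝ} (hA : A.IsHermitian) :
    ∃ U ∈ unitaryGroup ι ℝ, (U * A * star U).diag = hA.eigenvalues := by
  refine ⟨star hA.eigenvectorUnitary, (star hA.eigenvectorUnitary).2, ?_⟩
  have := hA.conjStarAlgAut_star_eigenvectorUnitary
  rw [Unitary.conjStarAlgAut_star_apply] at this
  simp [this]

lemma IsHermitian.sum_eigenvalues_sq {A : Matrix ι ι ℝ} (hA : A.IsHermitian) :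
    ∑ i, hA.eigenvalues i ^ 2 = ∑ i, ∑ j, A i j ^ 2 := by
  set U : Matrix ι ι ℝ := (hA.eigenvectorUnitary : Matrix ι ι ℝ)
  have hU : star U * U = 1 := Unitary.coe_star_mul_self _
  have hA' : A = U * diagonal hA.eigenvalues * star U := by
    simpa [Unitary.conjStarAlgAut_apply] using hA.spectral_theorem
  have hsq : A * A = U * (diagonal hA.eigenvalues * diagonal hA.eigenvalues) * star U := by
    conv_lhs => rw [hA']
    simp only [mul_assoc]
    rw [← mul_assoc (star U) U, hU, one_mul]
  calc ∑ i, hA.eigenvalues i ^ 2 = trace (A * A) := by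
        rw [hsq, trace_mul_cycle, hU, one_mul, diagonal_mul_diagonal, trace_diagonal]
        simp only [sq]
    _ = ∑ i, ∑ j, A i j ^ 2 := by
        simp only [trace, diag_apply, mul_apply, (isHermitian_iff_isSymm.mp hA).apply, sq]

end Matrix

lemma Matrix.IsSymm.sum_sq_le_two_mul_sum_upper {ι : Type*} [Fintype ι] [LinearOrder ι]
    {M : Matrix ι ι ℝ} (hM : M.IsSymm) :
    ∑ i, ∑ j, M i j ^ 2 ≤ 2 * ∑ p ∈ univ.filter (fun p : ι × ι => p.1 ≤ p.2), M p.1 p.2 ^ 2 := by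
  have hswap : ∑ p ∈ univ.filter (fun p : ι × ι => p.2 ≤ p.1), M p.1 p.2 ^ 2
      = ∑ p ∈ univ.filter (fun p : ι × ι => p.1 ≤ p.2), M p.1 p.2 ^ 2 :=
    sum_equiv (Equiv.prodComm ι ι) (by simp) fun p _ => by simp [hM.apply]
  calc ∑ i, ∑ j, M i j ^ 2
      = ∑ p ∈ univ.filter (fun p : ι × ι => p.1 ≤ p.2), M p.1 p.2 ^ 2
        + ∑ p ∈ univ.filter (fun p : ι × ι => ¬ p.1 ≤ p.2), M p.1 p.2 ^ 2 := by
        rw [sum_filter_add_sum_filter_not, ← univ_product_univ, sum_product]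
    _ ≤ ∑ p ∈ univ.filter (fun p : ι × ι => p.1 ≤ p.2), M p.1 p.2 ^ 2
        + ∑ p ∈ univ.filter (fun p : ι × ι => p.2 ≤ p.1), M p.1 p.2 ^ 2 := by
        refine add_le_add le_rfl (sum_le_sum_of_subset_of_nonneg (fun p hp => ?_)
          fun _ _ _ => sq_nonneg _)
        simp only [mem_filter, not_le] at hp ⊢
        exact ⟨hp.1, hp.2.le⟩
    _ = 2 * ∑ p ∈ univ.filter (fun p : ι × ι => p.1 ≤ p.2), M p.1 p.2 ^ 2 := by
        rw [hswap, two_mul]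

lemma sum_abs_pow_le_sqrt_sum_sq_pow {ι : Type*} [Fintype ι] {k : ℕ} (hk : 2 ≤ k)
    (x : ι → ℝ) : ∑ i, |x i| ^ k ≤ √(∑ i, x i ^ 2) ^ k := by
  set S := ∑ i, x i ^ 2
  have hS : 0 ≤ S := sum_nonneg fun i _ => sq_nonneg _
  have hx : ∀ i, |x i| ≤ √S := fun i => by
    rw [← Real.sqrt_sq_eq_abs]
    exact Real.sqrt_le_sqrt (single_le_sum (f := fun j => x j ^ 2) (fun j _ => sq_nonneg _)
      (mem_univ i))
  obtain ⟨m, rfl⟩ := Nat.exists_eq_add_of_le' hk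
  calc ∑ i, |x i| ^ (m + 2) = ∑ i, x i ^ 2 * |x i| ^ m := by
        simp_rw [pow_add, sq_abs, mul_comm]
    _ ≤ ∑ i, x i ^ 2 * √S ^ m := by
        gcongr with i
        exact hx i
    _ = √S ^ (m + 2) := by rw [← sum_mul, pow_add, Real.sq_sqrt hS, mul_comm]

section Schatten

variable {n k : ℕ} {A B : Matrix (Fin n) (Fin n) ℝ}

lemma schatten_eq_of_isHermitian (hA : A.IsHermitian) :
    schatten k A = (∑ i, |hA.eigenvalues i| ^ k) ^ ((1 : ℝ) / k) := by
  rw [schatten, eigsOf, dif_pos hA]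

lemma schatten_eq_norm_toLp (hk : k ≠ 0) (hA : A.IsHermitian) :
    schatten k A = ‖WithLp.toLp (k : ℝ≥0∞) hA.eigenvalues‖ := by
  rw [schatten_eq_of_isHermitian hA, PiLp.norm_eq_sum (by simpa using Nat.pos_of_ne_zero hk)]
  simp [Real.rpow_natCast]

lemma norm_toLp_diag_conj_le_schatten (hk : 1 ≤ k) (hA : A.IsHermitian)
    {U : Matrix (Fin n) (Fin n) ℝ} (hU : U ∈ unitaryGroup (Fin n) ℝ) :
    ‖WithLp.toLp (k : ℝ≥0∞) (U * A * star U).diag‖ ≤ schatten k A := by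
  have : Fact (1 ≤ (k : ℝ≥0∞)) := ⟨mod_cast hk⟩
  rw [schatten_eq_norm_toLp (by omega) hA]
  exact hA.norm_toLp_diag_conj_le hU _

lemma exists_schatten_eq_norm_toLp_diag_conj (hk : k ≠ 0) (hA : A.IsHermitian) :
    ∃ U ∈ unitaryGroup (Fin n) ℝ,
      schatten k A = ‖WithLp.toLp (k : ℝ≥0∞) (U * A * star U).diag‖ := by
  obtain ⟨U, hU, hdiag⟩ := hA.exists_diag_conj_eq_eigenvalues
  exact ⟨U, hU, by rw [hdiag, schatten_eq_norm_toLp hk hA]⟩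

lemma schatten_add_le (hk : 1 ≤ k) (hA : A.IsHermitian) (hB : B.IsHermitian) :
    schatten k (A + B) ≤ schatten k A + schatten k B := by
  have : Fact (1 ≤ (k : ℝ≥0∞)) := ⟨mod_cast hk⟩
  obtain ⟨U, hU, h⟩ := exists_schatten_eq_norm_toLp_diag_conj
    (Nat.one_le_iff_ne_zero.mp hk) (hA.add hB)
  rw [h, mul_add, add_mul, diag_add, WithLp.toLp_add]
  exact (norm_add_le _ _).trans (add_le_add (norm_toLp_diag_conj_le_schatten hk hA hU)
    (norm_toLp_diag_conj_le_schatten hk hB hU))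

lemma schatten_smul_le (hk : 1 ≤ k) (hA : A.IsHermitian) (c : ℝ) :
    schatten k (c • A) ≤ |c| * schatten k A := by
  have : Fact (1 ≤ (k : ℝ≥0∞)) := ⟨mod_cast hk⟩
  obtain ⟨U, hU, h⟩ := exists_schatten_eq_norm_toLp_diag_conj
    (Nat.one_le_iff_ne_zero.mp hk) (hA.smul (.all c))
  rw [h, Matrix.mul_smul, Matrix.smul_mul, diag_smul, WithLp.toLp_smul, norm_smul,
    Real.norm_eq_abs]
  exact mul_le_mul_of_nonneg_left (norm_toLp_diag_conj_le_schatten hk hA hU) (abs_nonneg c)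

lemma schatten_convexOn (hk : 1 ≤ k) :
    ConvexOn ℝ {A : Matrix (Fin n) (Fin n) ℝ | A.IsHermitian} (schatten k) := by
  refine ⟨fun A hA B hB a b _ _ _ => (hA.smul (.all a)).add (hB.smul (.all b)),
    fun A hA B hB a b ha hb _ => ?_⟩
  calc schatten k (a • A + b • B) ≤ schatten k (a • A) + schatten k (b • B) :=
        schatten_add_le hk (hA.smul (.all a)) (hB.smul (.all b))
    _ ≤ |a| * schatten k A + |b| * schatten k B :=
        add_le_add (schatten_smul_le hk hA a) (schatten_smul_le hk hB b)
    _ = a • schatten k A + b • schatten k B := by rw [abs_of_nonneg ha, abs_of_nonneg hb]; rfl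

lemma abs_schatten_sub_schatten_le (hk : 1 ≤ k) (hA : A.IsHermitian) (hB : B.IsHermitian) :
    |schatten k A - schatten k B| ≤ schatten k (A - B) := by
  have hAB := hA.sub hB
  rw [abs_sub_le_iff, sub_le_iff_le_add, sub_le_iff_le_add]
  constructor
  · simpa using schatten_add_le hk hAB hB
  · simpa [add_comm] using (schatten_add_le hk (hAB.smul (.all (-1))) hA).trans
      (add_le_add_left (schatten_smul_le hk hAB (-1)) _)

lemma schatten_le_sqrt_sum_sq (hk : 2 ≤ k) (hA : A.IsHermitian) :
    schatten k A ≤ √(∑ i, ∑ j, A i j ^ 2) := by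
  rw [schatten_eq_of_isHermitian hA, ← hA.sum_eigenvalues_sq, one_div]
  calc (∑ i, |hA.eigenvalues i| ^ k) ^ (k⁻¹ : ℝ)
      ≤ (√(∑ i, hA.eigenvalues i ^ 2) ^ k) ^ (k⁻¹ : ℝ) :=
        Real.rpow_le_rpow (by positivity) (sum_abs_pow_le_sqrt_sum_sq_pow hk _) (by positivity)
    _ = √(∑ i, hA.eigenvalues i ^ 2) := Real.pow_rpow_inv_natCast (Real.sqrt_nonneg _) (by omega)

lemma schatten_one_le_sqrt_mul_sum_sq (hA : A.IsHermitian) :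
    schatten 1 A ≤ √(n * ∑ i, ∑ j, A i j ^ 2) := by
  rw [schatten_eq_of_isHermitian hA, ← hA.sum_eigenvalues_sq]
  simp only [pow_one, Nat.cast_one, div_one, Real.rpow_one]
  refine Real.le_sqrt_of_sq_le ?_
  simpa [sq_abs] using sq_sum_le_card_mul_sum_sq (s := univ) (f := fun i => |hA.eigenvalues i|)

lemma sum_sq_sub_le_two_mul_upperSq (hA : A.IsHermitian) (hB : B.IsHermitian) :
    ∑ i, ∑ j, (A - B) i j ^ 2 ≤ 2 * upperSq A B :=
  (isHermitian_iff_isSymm.mp (hA.sub hB)).sum_sq_le_two_mul_sum_upper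

end Schatten

theorem schatten_convex_lipschitz_general (n k : ℕ) (hk : 1 ≤ k) :
    ConvexOn ℝ {A : Matrix (Fin n) (Fin n) ℝ | A.IsHermitian} (schatten k) ∧
    (2 ≤ k → ∀ A B : Matrix (Fin n) (Fin n) ℝ, A.IsHermitian → B.IsHermitian →
      |schatten k A - schatten k B| ≤ Real.sqrt 2 * Real.sqrt (upperSq A B)) ∧
    (k = 1 → ∀ A B : Matrix (Fin n) (Fin n) ℝ, A.IsHermitian → B.IsHermitian →
      |schatten k A - schatten k B| ≤ Real.sqrt (2 * n) * Real.sqrt (upperSq A B)) := by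
  refine ⟨schatten_convexOn hk, fun hk2 A B hA hB => ?_, fun hk1 A B hA hB => ?_⟩
  · calc |schatten k A - schatten k B| ≤ schatten k (A - B) :=
          abs_schatten_sub_schatten_le hk hA hB
      _ ≤ √(∑ i, ∑ j, (A - B) i j ^ 2) := schatten_le_sqrt_sum_sq hk2 (hA.sub hB)
      _ ≤ √(2 * upperSq A B) := Real.sqrt_le_sqrt (sum_sq_sub_le_two_mul_upperSq hA hB)
      _ = √2 * √(upperSq A B) := Real.sqrt_mul zero_le_two _
  · subst hk1
    calc |schatten 1 A - schatten 1 B| ≤ schatten 1 (A - B) :=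
          abs_schatten_sub_schatten_le hk hA hB
      _ ≤ √(n * ∑ i, ∑ j, (A - B) i j ^ 2) := schatten_one_le_sqrt_mul_sum_sq (hA.sub hB)
      _ ≤ √(n * (2 * upperSq A B)) := by gcongr; exact sum_sq_sub_le_two_mul_upperSq hA hB
      _ = √(2 * n) * √(upperSq A B) := by
        rw [mul_left_comm, ← mul_assoc, Real.sqrt_mul (by positivity)]

/-- **`k`-Schatten norms**: `A ↦ ‖A‖_k` is convex on real symmetric matrices; it is
`√2`-Lipschitz (for `k ≥ 2`) and `√(2n)`-Lipschitz (for `k = 1`) with respect to the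
Euclidean norm on the upper-triangular entries. -/
theorem schatten_convex_lipschitz (n k : ℕ) (hn : 1 ≤ n) (hk : 1 ≤ k) :
    ConvexOn ℝ {A : Matrix (Fin n) (Fin n) ℝ | A.IsHermitian} (schatten k) ∧
    (2 ≤ k → ∀ A B : Matrix (Fin n) (Fin n) ℝ, A.IsHermitian → B.IsHermitian →
      |schatten k A - schatten k B| ≤ Real.sqrt 2 * Real.sqrt (upperSq A B)) ∧
    (k = 1 → ∀ A B : Matrix (Fin n) (Fin n) ℝ, A.IsHermitian → B.IsHermitian →
      |schatten k A - schatten k B| ≤ Real.sqrt (2 * n) * Real.sqrt (upperSq A B)) :=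
  schatten_convex_lipschitz_general n k hk
end

section
/- Let k, n, p ≥ 1 with p > ⌊k/2⌋ + 1 (equivalently 2(p−1) > k). Then Ŵ_{k,p}^{(n)} = ∅; that is, every closed walk of length k on Fin n visiting exactly p distinct vertices traverses some edge exactly once. -/
/-- Number of times the closed walk `w : ZMod k → Fin n` traverses the unordered edge `e`. -/
noncomputable def edgeCount (k n : ℕ) (e : Sym2 (Fin n)) (w : ZMod k → Fin n) : ℕ :=
  Nat.card {j : ZMod k // s(w j, w (j + 1)) = e}

/-- Closed walks of length `k` on `Fin n` visiting exactly `p` distinct vertices. -/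
def Wset (k n p : ℕ) : Set (ZMod k → Fin n) := {w | Nat.card (Set.range w) = p}

/-- Walks in `Wset k n p` that traverse each of their edges at least twice. -/
def WhatSet (k n p : ℕ) : Set (ZMod k → Fin n) :=
  {w ∈ Wset k n p | ∀ e : Sym2 (Fin n), 1 ≤ edgeCount k n e w → 2 ≤ edgeCount k n e w}

/-- **Pigeonhole for walks**: if `p > ⌊k/2⌋ + 1` then `Ŵ_{k,p} = ∅`; that is, every
closed walk of length `k` visiting exactly `p` distinct vertices traverses some edge
exactly once. -/
theorem whatSet_empty_of_many_vertices (k n p : ℕ) (hk : 1 ≤ k) (hn : 1 ≤ n) (hp : 1 ≤ p)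
    (h : k / 2 + 1 < p) : WhatSet k n p = ∅ := by
  classical
  haveI : NeZero k := ⟨by omega⟩
  ext w
  simp only [Set.mem_empty_iff_false, iff_false]
  rintro ⟨hw1, hw2⟩
  have hw1' : Nat.card (Set.range w) = p := hw1
  set f : ℕ → Fin n := fun j => w (j : ZMod k) with hf
  -- the finset of visited vertices
  have hrange : Set.range w = ↑(Finset.image w Finset.univ) := by simp
  have hcard_image : (Finset.image w Finset.univ).card = p := by
    rw [hrange, Nat.card_coe_set_eq, Set.ncard_coe_finset] at hw1'
    exact hw1'
  set S : Finset (Fin n) := (Finset.image w Finset.univ).erase (w 0) with hS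
  have hScard : S.card = p - 1 := by
    rw [hS, Finset.card_erase_of_mem (Finset.mem_image_of_mem _ (Finset.mem_univ 0)),
      hcard_image]
  -- first hitting time
  set t : Fin n → ℕ := fun v => if h : ∃ j : ℕ, f j = v then Nat.find h else 0 with ht
  have hspec : ∀ v : Fin n, (∃ j : ℕ, f j = v) → f (t v) = v ∧ ∀ j < t v, f j ≠ v := by
    intro v hv
    have heq : t v = Nat.find hv := dif_pos hv
    refine ⟨heq ▸ Nat.find_spec hv, fun j hj => ?_⟩
    exact Nat.find_min hv (heq ▸ hj)
  have hmemS : ∀ v ∈ S, ∃ j : ℕ, f j = v := by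
    intro v hv
    obtain ⟨i, -, rfl⟩ := Finset.mem_image.mp (Finset.mem_of_mem_erase hv)
    exact ⟨i.val, by simp [hf, ZMod.natCast_val, ZMod.cast_id]⟩
  have htpos : ∀ v ∈ S, 0 < t v := by
    intro v hv
    rcases Nat.eq_zero_or_pos (t v) with h' | h'
    swap
    · exact h'
    · exfalso
      have := (hspec v (hmemS v hv)).1
      rw [h'] at this
      have hne : v ≠ w 0 := Finset.ne_of_mem_erase hv
      apply hne
      rw [← this]
      simp [hf]
  have htlt : ∀ v ∈ S, t v < k := by
    intro v hv
    obtain ⟨i, -, rfl⟩ := Finset.mem_image.mp (Finset.mem_of_mem_erase hv)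
    have hwit : f i.val = w i := by simp [hf, ZMod.natCast_val, ZMod.cast_id]
    have hle : t (w i) ≤ i.val := by
      have heq : t (w i) = Nat.find (hmemS _ hv) := dif_pos _
      rw [heq]
      exact Nat.find_le hwit
    exact lt_of_le_of_lt hle (ZMod.val_lt i)
  -- edge set of walk
  set T : Finset (Sym2 (Fin n)) :=
    Finset.image (fun j : ZMod k => s(w j, w (j + 1))) Finset.univ with hT
  -- the "first edge" map
  set g : Fin n → Sym2 (Fin n) := fun v => s(f (t v - 1), f (t v)) with hg
  have hg_eq : ∀ v ∈ S, g v = s(w ((t v - 1 : ℕ) : ZMod k), w (((t v - 1 : ℕ) : ZMod k) + 1)) := by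
    intro v hv
    have h1 : (((t v - 1 : ℕ) : ZMod k) + 1) = ((t v : ℕ) : ZMod k) := by
      have : (t v - 1) + 1 = t v := Nat.succ_pred_eq_of_pos (htpos v hv)
      rw [← this]
      push_cast
      ring
    rw [hg]
    simp only [hf, h1]
  have hg_mem : ∀ v ∈ S, g v ∈ T := by
    intro v hv
    rw [hg_eq v hv, hT]
    exact Finset.mem_image_of_mem _ (Finset.mem_univ _)
  have hg_inj : Set.InjOn g S := by
    intro v hv v' hv' hgeq
    have hv1 := hspec v (hmemS v hv)
    have hv1' := hspec v' (hmemS v' hv')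
    simp only [hg, hv1.1, hv1'.1, Sym2.eq_iff] at hgeq
    rcases hgeq with ⟨-, h2⟩ | ⟨h1, h2⟩
    · exact h2
    · exfalso
      -- f (t v - 1) = v' and v = f (t v' - 1)
      have ha : t v' ≤ t v - 1 := by
        by_contra hc
        exact hv1'.2 (t v - 1) (by omega) h1
      have hb : t v ≤ t v' - 1 := by
        by_contra hc
        exact hv1.2 (t v' - 1) (by omega) h2.symm
      have := htpos v hv
      have := htpos v' hv'
      omega
  have hST : S.card ≤ T.card := Finset.card_le_card_of_injOn g hg_mem hg_inj
  -- counting: k = sum of fiber sizes over T, each ≥ 2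
  have hsum : (Finset.univ : Finset (ZMod k)).card
      = ∑ e ∈ T, (Finset.univ.filter fun j : ZMod k => s(w j, w (j + 1)) = e).card :=
    Finset.card_eq_sum_card_fiberwise
      (fun j _ => Finset.mem_image_of_mem _ (Finset.mem_univ j))
  have hcardk : (Finset.univ : Finset (ZMod k)).card = k := by
    simp [ZMod.card]
  have hfiber : ∀ e ∈ T,
      2 ≤ (Finset.univ.filter fun j : ZMod k => s(w j, w (j + 1)) = e).card := by
    intro e he
    have hec : edgeCount k n e w
        = (Finset.univ.filter fun j : ZMod k => s(w j, w (j + 1)) = e).card := by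
      rw [edgeCount, Nat.card_eq_fintype_card, Fintype.card_subtype]
    obtain ⟨j, -, hj⟩ := Finset.mem_image.mp he
    have h1 : 1 ≤ edgeCount k n e w := by
      rw [hec]
      refine Finset.card_pos.mpr ⟨j, ?_⟩
      simp [hj]
    have := hw2 e h1
    rwa [hec] at this
  have hk2 : 2 * T.card ≤ k := by
    calc 2 * T.card = ∑ _e ∈ T, 2 := by rw [Finset.sum_const, smul_eq_mul, mul_comm]
    _ ≤ ∑ e ∈ T, (Finset.univ.filter fun j : ZMod k => s(w j, w (j + 1)) = e).card :=
        Finset.sum_le_sum hfiber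
    _ = k := by rw [← hsum, hcardk]
  have : 2 * (p - 1) ≤ k := by
    calc 2 * (p - 1) = 2 * S.card := by rw [hScard]
    _ ≤ 2 * T.card := by omega
    _ ≤ k := hk2
  omega
end

section
/- Assume the ensemble setup. Then for all n, k ≥ 1: μ_{k,p}^{(n)} = 0 whenever p > ⌊k/2⌋ + 1, and consequently the k-th expected spectral moment satisfies m̄_k^{(n)} = ∑_{p=1}^{⌊k/2⌋+1} μ_{k,p}^{(n)}. -/
open MeasureTheory ProbabilityTheory Filter

/-- The random matrix `A_n` with entries `a i j / √n` (indices in `{1,…,n}`). -/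
noncomputable def matA {Ω : Type} (a : ℕ → ℕ → Ω → ℝ) (n : ℕ) (ω : Ω) :
    Matrix (Fin n) (Fin n) ℝ :=
  Matrix.of fun u v => a (u.1 + 1) (v.1 + 1) ω / Real.sqrt n

/-- The `k`-th spectral moment `m_k^{(n)} = (1/n)·trace(A_n^k)`. -/
noncomputable def specMom {Ω : Type} (a : ℕ → ℕ → Ω → ℝ) (n k : ℕ) (ω : Ω) : ℝ :=
  (1 / (n : ℝ)) * Matrix.trace ((matA a n ω) ^ k)

/-- The `k`-th expected spectral moment `m̄_k^{(n)} = E[m_k^{(n)}]`. -/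
noncomputable def expSpecMom {Ω : Type} [MeasurableSpace Ω] (P : Measure Ω)
    (a : ℕ → ℕ → Ω → ℝ) (n k : ℕ) : ℝ :=
  ∫ ω, specMom a n k ω ∂P

/-- `σ̂_n = max_{1 ≤ i ≤ n} σ i`. -/
noncomputable def sigHat (σ : ℕ → ℝ) (n : ℕ) : ℝ := sSup (σ '' Set.Icc 1 n)

/-- `σ̌_n = min_{1 ≤ i ≤ n} σ i`. -/
noncomputable def sigCheck (σ : ℕ → ℝ) (n : ℕ) : ℝ := sInf (σ '' Set.Icc 1 n)

open Classical in
/-- `μ_{k,p}^{(n)} = n^{−(k/2+1)} ∑_{w ∈ W_{k,p}} E[∏_j a_{w(j) w(j+1)}]`. -/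
noncomputable def muW {Ω : Type} [MeasurableSpace Ω] (P : Measure Ω)
    (a : ℕ → ℕ → Ω → ℝ) (k p n : ℕ) (hk : k ≠ 0) : ℝ :=
  haveI : NeZero k := ⟨hk⟩
  (n : ℝ) ^ (-((k : ℝ) / 2 + 1)) *
    ∑ w : ZMod k → Fin n,
      if w ∈ Wset k n p then
        ∫ ω, ∏ j : ZMod k, a ((w j).1 + 1) ((w (j + 1)).1 + 1) ω ∂P
      else 0

/-!
Expanding `trace (A_n ^ k)` over closed walks `w : ZMod k → Fin n` writes `m̄_k` as
`n^{-(k/2+1)}` times the sum of the expected walk weights `E[∏_j a_{w j, w (j+1)}]`; grouping the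
walks by their number `p` of visited vertices gives the `μ_{k,p}`. A closed walk visiting `p`
vertices uses at least `p - 1` distinct edges, so if `p > ⌊k/2⌋ + 1` one of its `k` steps
traverses an edge that no other step traverses. The entries above the diagonal being independent,
the expected weight of such a walk factors through the mean of that entry, which is `0`.
-/

open Finset

namespace Matrix

variable {n R : Type*} [Fintype n] [DecidableEq n] [CommSemiring R]

theorem pow_apply_eq_sum_prod (A : Matrix n n R) (k : ℕ) (i j : n) :
    (A ^ k) i j = ∑ p : Fin k → n,
      (∏ t : Fin k, A ((Fin.cons i p : Fin (k + 1) → n) t.castSucc) (p t)) *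
        if (Fin.cons i p : Fin (k + 1) → n) (Fin.last k) = j then 1 else 0 := by
  induction k generalizing i with
  | zero => simp [one_apply]
  | succ k ih =>
    rw [pow_succ', mul_apply, ← (Fin.consEquiv fun _ => n).sum_comp, Fintype.sum_prod_type]
    refine sum_congr rfl fun x _ => ?_
    rw [ih, mul_sum]
    refine sum_congr rfl fun p _ => ?_
    simp only [Fin.consEquiv_apply, Fin.prod_univ_succ, Fin.castSucc_zero, Fin.cons_zero,
      Fin.cons_succ, ← Fin.succ_castSucc, ← Fin.succ_last]
    ring

theorem trace_pow_eq_sum_prod {k : ℕ} [NeZero k] (A : Matrix n n R) :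
    trace (A ^ k) = ∑ w : ZMod k → n, ∏ j, A (w j) (w (j + 1)) := by
  obtain ⟨m, rfl⟩ : ∃ m, k = m + 1 := Nat.exists_eq_add_one.mpr (NeZero.pos k)
  -- `ZMod (m + 1)` is `Fin (m + 1)` by definition, with the same cyclic addition.
  change _ = ∑ w : Fin (m + 1) → n, ∏ j, A (w j) (w (j + 1))
  have cons_last (p : Fin (m + 1) → n) (t : Fin (m + 1)) :
      (Fin.cons (p (Fin.last m)) p : Fin (m + 2) → n) t.castSucc = p (t - 1) := by
    cases t using Fin.cases with
    | zero =>
      simp only [Fin.castSucc_zero, Fin.cons_zero, zero_sub]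
      congr 1
      ext
      simp [Fin.coe_neg_one]
    | succ s =>
      rw [← Fin.succ_castSucc, Fin.cons_succ]
      congr 1
      ext
      simp [Fin.coe_sub_one]
  simp only [trace, diag, pow_apply_eq_sum_prod]
  rw [sum_comm]
  refine sum_congr rfl fun p _ => ?_
  simp only [mul_ite, mul_one, mul_zero, ← Fin.succ_last, Fin.cons_succ, sum_ite_eq,
    mem_univ, if_true, cons_last]
  exact Fintype.prod_equiv (Equiv.subRight 1) _ _ fun t => by simp

end Matrix

section ClosedWalk

variable {α : Type*} [DecidableEq α]

theorem card_image_range_le_card_image_edges_add_one (f : ℕ → α) (m : ℕ) :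
    #((range (m + 1)).image f) ≤ #((range m).image fun i => s(f i, f (i + 1))) + 1 := by
  induction m with
  | zero => simp
  | succ m ih =>
    rw [range_add_one (n := m), image_insert, range_add_one (n := m + 1), image_insert]
    by_cases hold : f (m + 1) ∈ (range (m + 1)).image f
    · rw [insert_eq_of_mem hold]
      exact ih.trans (by gcongr; exact subset_insert _ _)
    · have hnew : s(f m, f (m + 1)) ∉ (range m).image fun i => s(f i, f (i + 1)) := by
        simp only [mem_image, mem_range, not_exists, not_and]
        intro i hi heq
        apply hold
        rcases Sym2.eq_iff.mp heq with ⟨-, h⟩ | ⟨h, -⟩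
        · exact mem_image.mpr ⟨i + 1, by simp; omega, h⟩
        · exact mem_image.mpr ⟨i, by simp; omega, h⟩
      rw [card_insert_of_notMem hold, card_insert_of_notMem hnew]
      omega

theorem Fintype.exists_card_fiber_eq_one_of_card_lt_two_mul {J β : Type*} [Fintype J] [DecidableEq β] (g : J → β)
    (h : Fintype.card J < 2 * #(univ.image g)) : ∃ j₀, #{j | g j = g j₀} = 1 := by
  obtain ⟨y, hy, hlt⟩ := Finset.exists_card_fiber_lt_of_card_lt_mul (s := univ) (f := g) (n := 2)
    (by rwa [Finset.card_univ, mul_comm])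
  obtain ⟨j₀, -, rfl⟩ := mem_image.mp hy
  have : 0 < #{j | g j = g j₀} := Finset.card_pos.mpr ⟨j₀, by simp⟩
  exact ⟨j₀, by omega⟩

namespace ZMod

variable {k : ℕ} [NeZero k]

theorem card_image_le_card_image_edges_add_one (w : ZMod k → α) :
    #(univ.image w) ≤ #(univ.image fun j => s(w j, w (j + 1))) + 1 := by
  obtain ⟨m, rfl⟩ : ∃ m, k = m + 1 := Nat.exists_eq_add_one.mpr (NeZero.pos k)
  calc #(univ.image w)
      ≤ #((range (m + 1)).image fun i : ℕ => w i) := by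
        refine card_le_card fun x hx => ?_
        obtain ⟨j, -, rfl⟩ := mem_image.mp hx
        exact mem_image.mpr ⟨j.val, mem_range.mpr (ZMod.val_lt j), by simp⟩
    _ ≤ #((range m).image fun i : ℕ => s(w i, w ↑(i + 1))) + 1 :=
        card_image_range_le_card_image_edges_add_one _ m
    _ ≤ #(univ.image fun j => s(w j, w (j + 1))) + 1 := by
        gcongr
        intro e he
        obtain ⟨i, -, rfl⟩ := mem_image.mp he
        exact mem_image.mpr ⟨i, mem_univ _, by push_cast; rfl⟩

theorem exists_edge_card_fiber_eq_one (w : ZMod k → α) (hw : k / 2 + 1 < #(univ.image w)) :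
    ∃ j₀, #{j | s(w j, w (j + 1)) = s(w j₀, w (j₀ + 1))} = 1 := by
  refine Fintype.exists_card_fiber_eq_one_of_card_lt_two_mul _ ?_
  have := card_image_le_card_image_edges_add_one w
  rw [ZMod.card]
  omega

end ZMod

end ClosedWalk

theorem ProbabilityTheory.iIndepFun.integral_prod_comp_eq_zero {Ω ι J : Type*}
    [MeasurableSpace Ω] {P : Measure Ω} [Fintype J] [DecidableEq ι] {X : ι → Ω → ℝ}
    (hX : iIndepFun X P) (hmeas : ∀ i, Measurable (X i)) (g : J → ι) {j₀ : J}
    (hj₀ : #{j | g j = g j₀} = 1) (hmean : ∫ ω, X (g j₀) ω ∂P = 0) :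
    ∫ ω, ∏ j, X (g j) ω ∂P = 0 := by
  set Y : ι → Ω → ℝ := fun i ω => X i ω ^ #{j | g j = i}
  have hY : iIndepFun Y P := hX.comp (fun i x => x ^ #{j | g j = i}) fun i => by fun_prop
  have hYmeas (i : ι) : Measurable (Y i) := (hmeas i).pow_const _
  have hY₀ : Y (g j₀) = X (g j₀) := by simp only [Y, hj₀, pow_one]
  have hsplit : (fun ω => ∏ j, X (g j) ω) =
      (∏ i ∈ (univ.image g).erase (g j₀), Y i) * Y (g j₀) := by
    ext ω
    rw [Pi.mul_apply, prod_apply, prod_erase_mul _ (fun i => Y i ω)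
      (mem_image_of_mem g (mem_univ j₀)), prod_comp (fun i => X i ω) g]
  rw [hsplit, (hY.indepFun_finsetProd_of_notMem hYmeas (notMem_erase _ _))
    |>.integral_mul_eq_mul_integral (by fun_prop) (hYmeas _).aestronglyMeasurable,
    hY₀, hmean, mul_zero]

theorem Real.rpow_neg_div_two_add_one {x : ℝ} (hx : 0 ≤ x) (k : ℕ) :
    x ^ (-((k : ℝ) / 2 + 1)) = (x * √x ^ k)⁻¹ := by
  rw [Real.rpow_neg hx, Real.rpow_add' hx (by positivity), Real.rpow_one, Real.sqrt_eq_rpow,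
    ← Real.rpow_natCast, ← Real.rpow_mul hx, mul_comm]
  ring_nf

def entryIndex {n : ℕ} (e : Sym2 (Fin n)) : {q : ℕ × ℕ // 1 ≤ q.1 ∧ q.1 ≤ q.2} :=
  ⟨(e.inf.val + 1, e.sup.val + 1), Nat.le_add_left 1 _, Nat.add_le_add_right e.inf_le_sup 1⟩

theorem entryIndex_injective {n : ℕ} : Function.Injective (entryIndex (n := n)) := by
  intro e e' h
  simp only [entryIndex, Subtype.mk.injEq, Prod.mk.injEq, add_left_inj, Fin.val_inj] at h
  exact Sym2.inf_eq_inf_and_sup_eq_sup.mp h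

theorem apply_eq_apply_entryIndex {Ω : Type*} {a : ℕ → ℕ → Ω → ℝ}
    (hsymm : ∀ i j, a i j = a j i) {n : ℕ} (u v : Fin n) :
    a (u.1 + 1) (v.1 + 1) = a (entryIndex s(u, v)).1.1 (entryIndex s(u, v)).1.2 := by
  rcases le_total u v with h | h
  · simp [entryIndex, h]
  · simp [entryIndex, h, hsymm (u.1 + 1)]

section Ensemble

variable {Ω : Type} {a : ℕ → ℕ → Ω → ℝ}

noncomputable def walkWeight (a : ℕ → ℕ → Ω → ℝ) {n k : ℕ} [NeZero k] (w : ZMod k → Fin n)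
    (ω : Ω) : ℝ :=
  ∏ j, a ((w j).1 + 1) ((w (j + 1)).1 + 1) ω

variable {n k : ℕ} [NeZero k]

theorem specMom_eq_sum_walkWeight (ω : Ω) :
    specMom a n k ω = ((n : ℝ) * √n ^ k)⁻¹ * ∑ w : ZMod k → Fin n, walkWeight a w ω := by
  simp only [specMom, Matrix.trace_pow_eq_sum_prod, matA, Matrix.of_apply, prod_div_distrib,
    prod_const, card_univ, ZMod.card, ← sum_div, walkWeight]
  rw [mul_inv, one_div]
  ring

variable [MeasurableSpace Ω] {P : Measure Ω}

theorem integrable_walkWeight [IsFiniteMeasure P] {K : ℝ} (hmeas : ∀ i j, Measurable (a i j))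
    (hbdd : ∀ i j, 1 ≤ i → 1 ≤ j → ∀ᵐ ω ∂P, |a i j ω| < K) (w : ZMod k → Fin n) :
    Integrable (walkWeight a w) P := by
  refine .of_bound (by unfold walkWeight; fun_prop) (K ^ k) ?_
  have hall : ∀ᵐ ω ∂P, ∀ j, |a ((w j).1 + 1) ((w (j + 1)).1 + 1) ω| < K :=
    ae_all_iff.mpr fun j => hbdd _ _ (Nat.le_add_left 1 _) (Nat.le_add_left 1 _)
  filter_upwards [hall] with ω hω
  rw [walkWeight, Real.norm_eq_abs, abs_prod]
  calc ∏ j, |a ((w j).1 + 1) ((w (j + 1)).1 + 1) ω| ≤ ∏ _j : ZMod k, K :=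
        prod_le_prod (fun _ _ => abs_nonneg _) fun j _ => (hω j).le
    _ = K ^ k := by rw [prod_const, card_univ, ZMod.card]

theorem integral_walkWeight_eq_zero (hmeas : ∀ i j, Measurable (a i j))
    (hsymm : ∀ i j, a i j = a j i)
    (hindep : iIndepFun (fun q : {q : ℕ × ℕ // 1 ≤ q.1 ∧ q.1 ≤ q.2} => a q.1.1 q.1.2) P)
    (hmean : ∀ i j, 1 ≤ i → 1 ≤ j → ∫ ω, a i j ω ∂P = 0) (w : ZMod k → Fin n)
    (hw : k / 2 + 1 < Nat.card (Set.range w)) :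
    ∫ ω, walkWeight a w ω ∂P = 0 := by
  rw [Nat.card_eq_card_toFinset, Set.toFinset_range] at hw
  obtain ⟨j₀, hj₀⟩ := ZMod.exists_edge_card_fiber_eq_one w hw
  simp only [walkWeight, apply_eq_apply_entryIndex hsymm]
  refine hindep.integral_prod_comp_eq_zero (fun q => hmeas _ _)
    (fun j => entryIndex s(w j, w (j + 1))) (j₀ := j₀) ?_ ?_
  · simpa only [entryIndex_injective.eq_iff] using hj₀
  · exact hmean _ _ (entryIndex _).2.1 ((entryIndex _).2.1.trans (entryIndex _).2.2)

theorem expSpecMom_eq_sum_integral_walkWeight [IsFiniteMeasure P] {K : ℝ}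
    (hmeas : ∀ i j, Measurable (a i j))
    (hbdd : ∀ i j, 1 ≤ i → 1 ≤ j → ∀ᵐ ω ∂P, |a i j ω| < K) :
    expSpecMom P a n k =
      (n : ℝ) ^ (-((k : ℝ) / 2 + 1)) * ∑ w : ZMod k → Fin n, ∫ ω, walkWeight a w ω ∂P := by
  simp only [expSpecMom, specMom_eq_sum_walkWeight, Real.rpow_neg_div_two_add_one n.cast_nonneg]
  rw [integral_const_mul, integral_finsetSum _ fun w _ => integrable_walkWeight hmeas hbdd w]

theorem muW_eq_sum_integral_walkWeight (p : ℕ) (hk : k ≠ 0) :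
    muW P a k p n hk = (n : ℝ) ^ (-((k : ℝ) / 2 + 1)) *
      ∑ w : ZMod k → Fin n with Nat.card (Set.range w) = p, ∫ ω, walkWeight a w ω ∂P := by
  simp only [muW, Wset, Set.mem_ofPred_eq, sum_filter, walkWeight]
  exact congrArg _ (sum_congr rfl fun w _ => by congr)

end Ensemble

/-- **Only dominant exponents contribute**: `μ_{k,p} = 0` for `p > ⌊k/2⌋ + 1`, hence
`m̄_k^{(n)} = ∑_{p=1}^{⌊k/2⌋+1} μ_{k,p}^{(n)}`. -/
theorem expected_moment_eq_sum_mu {Ω : Type} [MeasurableSpace Ω]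
    (P : Measure Ω) [IsProbabilityMeasure P]
    (K : ℝ)
    (a : ℕ → ℕ → Ω → ℝ)
    (hmeas : ∀ i j, Measurable (a i j))
    (hsymm : ∀ i j, a i j = a j i)
    (hindep : iIndepFun
      (fun q : {q : ℕ × ℕ // 1 ≤ q.1 ∧ q.1 ≤ q.2} => a q.1.1 q.1.2) P)
    (hmean : ∀ i j, 1 ≤ i → 1 ≤ j → ∫ ω, a i j ω ∂P = 0)
    (hbdd : ∀ i j, 1 ≤ i → 1 ≤ j → ∀ᵐ ω ∂P, |a i j ω| < K)
    (n k : ℕ) (hk : 1 ≤ k) :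
    (∀ p : ℕ, k / 2 + 1 < p → muW P a k p n (by omega) = 0) ∧
    expSpecMom P a n k = ∑ p ∈ Finset.Icc 1 (k / 2 + 1), muW P a k p n (by omega) := by
  have : NeZero k := ⟨by omega⟩
  have hvanish := integral_walkWeight_eq_zero (n := n) (k := k) hmeas hsymm hindep hmean
  refine ⟨fun p hp => ?_, ?_⟩
  · rw [muW_eq_sum_integral_walkWeight, sum_eq_zero fun w hw => hvanish w ?_, mul_zero]
    rwa [(mem_filter.mp hw).2]
  · simp only [expSpecMom_eq_sum_integral_walkWeight hmeas hbdd, muW_eq_sum_integral_walkWeight,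
      ← mul_sum, sum_filter]
    rw [sum_comm]
    refine congrArg _ (sum_congr rfl fun w _ => ?_)
    rw [sum_ite_eq, eq_comm, ite_eq_left_iff, mem_Icc]
    intro hout
    have : 0 < Nat.card (Set.range w) := Nat.card_pos
    exact (hvanish w (by omega)).symm
end

section
/- Assume the ensemble setup. For all s ≥ 1 and all n ≥ s + 1, the dominant term satisfies the lower bound μ_{2s,s+1}^{(n)} ≥ ((n−s)/n)^{s+1}·C_s·σ̌_n^{2s}, where C_s = Nat.catalan s is the s-th Catalan number. -/
open MeasureTheory ProbabilityTheory Filter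

/-
Every term of `μ_{2s,s+1}` is nonnegative. By independence, the expectation of a closed walk
factorises over its distinct edges, the factor of an edge traversed `m` times being `E[a^m]`.
If some edge is traversed once, the term vanishes because the entries are centred. Otherwise,
since a closed walk on `s + 1` vertices uses at least `s` distinct edges and has only `2s` steps,
every edge is traversed exactly twice and the term is a product of `s` variances `σ_i σ_j`,
each at least `σ̌²`.

It therefore suffices to exhibit enough such walks: the depth-first contour walks of the plane
trees with `s` edges, which are counted by the binary trees with `s` nodes, i.e. by `C_s`, with
vertices embedded injectively into `Fin n` in `n (n-1) ⋯ (n-s) ≥ (n-s)^(s+1)` ways. A contour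
walk determines both its tree and its embedding, since the walk returns to a vertex exactly
when it has finished the subtree below it.
-/

open Finset

theorem List.append_cons_inj_of_notMem_left {α : Type*} {x₁ x₂ z₁ z₂ : List α} {a : α}
    (h₁ : a ∉ x₁) (h₂ : a ∉ x₂) (h : x₁ ++ a :: z₁ = x₂ ++ a :: z₂) : x₁ = x₂ ∧ z₁ = z₂ := by
  induction x₁ generalizing x₂ with
  | nil =>
    cases x₂ with
    | nil => simpa using h
    | cons c x₂ =>
      obtain ⟨rfl, -⟩ := List.cons.inj h
      exact absurd List.mem_cons_self h₂
  | cons b x₁ ih =>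
    cases x₂ with
    | nil =>
      obtain ⟨rfl, -⟩ := List.cons.inj h
      exact absurd List.mem_cons_self h₁
    | cons c x₂ =>
      simp only [List.cons_append, List.cons.injEq] at h
      obtain ⟨rfl, h⟩ := h
      have := ih (List.not_mem_of_not_mem_cons h₁) (List.not_mem_of_not_mem_cons h₂) h
      exact ⟨by rw [this.1], this.2⟩

theorem Multiset.count_eq_two_of_two_le_count {β : Type*} [DecidableEq β] {M : Multiset β}
    (h2 : ∀ e ∈ M, 2 ≤ M.count e) (hcard : card M ≤ 2 * M.toFinset.card) :
    ∀ e ∈ M, M.count e = 2 := by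
  have hsum : ∑ e ∈ M.toFinset, 2 = ∑ e ∈ M.toFinset, M.count e := by
    refine le_antisymm (sum_le_sum fun e he => h2 e (mem_toFinset.mp he)) ?_
    rw [toFinset_sum_count_eq, sum_const, smul_eq_mul]
    omega
  intro e he
  exact ((sum_eq_sum_iff_of_le fun e he => h2 e (mem_toFinset.mp he)).mp hsum e
    (mem_toFinset.mpr he)).symm

theorem ProbabilityTheory.iIndepFun.integral_multiset_prod_map {Ω ι : Type*}
    [MeasurableSpace Ω] {P : Measure Ω} [DecidableEq ι] {X : ι → Ω → ℝ} (hX : iIndepFun X P)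
    (hmeas : ∀ i, Measurable (X i)) (M : Multiset ι) :
    ∫ ω, (M.map (X · ω)).prod ∂P = ∏ i ∈ M.toFinset, ∫ ω, X i ω ^ M.count i ∂P := by
  have hY : iIndepFun (fun i : M.toFinset => fun ω => X i ω ^ M.count (i : ι)) P :=
    (hX.comp (fun i x => x ^ M.count i) fun i => by fun_prop).precomp Subtype.val_injective
  simp_rw [Finset.prod_multiset_map_count, ← Finset.prod_coe_sort M.toFinset]
  exact hY.integral_fun_prod_eq_prod_integral fun i => ((hmeas i).pow_const _).aestronglyMeasurable

section Walks

variable {α : Type*}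

def pathEdges : α → List α → List (Sym2 α)
  | _, [] => []
  | u, x :: xs => s(u, x) :: pathEdges x xs

theorem map_range_getD_eq_pathEdges (u d : α) (L : List α) :
    (List.range L.length).map (fun i => s((u :: L).getD i d, (u :: L).getD (i + 1) d)) =
      pathEdges u L := by
  induction L generalizing u with
  | nil => rfl
  | cons x xs ih =>
    rw [List.length_cons, List.range_succ_eq_map, List.map_cons, List.map_map, pathEdges, ← ih]
    rfl

variable {k : ℕ} [NeZero k]

def cycleEdges (w : ZMod k → α) : Multiset (Sym2 α) :=
  Finset.univ.val.map fun j => s(w j, w (j + 1))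

theorem ZMod.apply_val_add_one {v : ℕ → α} (hv : v k = v 0) (j : ZMod k) :
    v (j + 1).val = v (j.val + 1) := by
  rw [ZMod.val_add, ZMod.val_one_eq_one_mod, Nat.add_mod_mod]
  rcases Nat.lt_or_eq_of_le (ZMod.val_lt j) with h | h
  · rw [Nat.mod_eq_of_lt h]
  · rw [← Nat.succ_eq_add_one, h, Nat.mod_self, hv]

theorem ZMod.univ_val_map_val :
    (univ : Finset (ZMod k)).val.map ZMod.val = Multiset.range k := by
  have h : (univ : Finset (ZMod k)).map ⟨ZMod.val, ZMod.val_injective k⟩ = range k := by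
    ext i
    simp only [Finset.mem_map, Finset.mem_univ, true_and, Function.Embedding.coeFn_mk,
      Finset.mem_range]
    exact ⟨fun ⟨j, hj⟩ => hj ▸ ZMod.val_lt j, fun hi => ⟨i, ZMod.val_cast_of_lt hi⟩⟩
  simpa using congrArg Finset.val h

theorem cycleEdges_eq_map_range {v : ℕ → α} (hv : v k = v 0) :
    cycleEdges (fun j : ZMod k => v j.val) =
      ((List.range k).map fun i => s(v i, v (i + 1)) : Multiset (Sym2 α)) := by
  simp only [cycleEdges, ZMod.apply_val_add_one hv]
  rw [← Multiset.map_coe, ← Multiset.range, ← ZMod.univ_val_map_val, Multiset.map_map]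
  rfl

variable [DecidableEq α]

theorem card_image_range_succ_le_card_edges_add_one (v : ℕ → α) (t : ℕ) :
    ((range (t + 1)).image v).card ≤
      ((range t).image fun i => s(v i, v (i + 1))).card + 1 := by
  induction t with
  | zero => simp
  | succ t ih =>
    rw [range_add_one (n := t + 1), image_insert]
    by_cases hv : v (t + 1) ∈ (range (t + 1)).image v
    · rw [insert_eq_of_mem hv]
      exact ih.trans (Nat.add_le_add_right (card_le_card (image_subset_image
        (range_subset_range.mpr t.le_succ))) 1)
    · have he : s(v t, v (t + 1)) ∉ (range t).image fun i => s(v i, v (i + 1)) := by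
        simp only [mem_image, mem_range, Sym2.eq_iff, not_exists, not_and]
        intro i hi h
        refine hv (mem_image.mpr ?_)
        rcases h with ⟨-, h⟩ | ⟨h, -⟩
        · exact ⟨i + 1, by simp; omega, h⟩
        · exact ⟨i, by simp; omega, h⟩
      have hrange : (range (t + 1)).image (fun i => s(v i, v (i + 1))) =
          insert s(v t, v (t + 1)) ((range t).image fun i => s(v i, v (i + 1))) := by
        rw [range_add_one, image_insert]
      rw [card_insert_of_notMem hv, hrange, card_insert_of_notMem he]
      omega

theorem card_image_le_card_cycleEdges_add_one (w : ZMod k → α) :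
    (univ.image w).card ≤ (cycleEdges w).toFinset.card + 1 := by
  have hv := card_image_range_succ_le_card_edges_add_one (fun i : ℕ => w i) (k - 1)
  rw [Nat.sub_add_cancel NeZero.one_le] at hv
  refine le_trans (le_of_eq (congrArg Finset.card ?_))
    (hv.trans (Nat.add_le_add_right (card_le_card ?_) 1))
  · ext x
    simp only [mem_image, mem_univ, true_and, mem_range]
    exact ⟨fun ⟨j, hj⟩ => ⟨j.val, ZMod.val_lt j, by rw [ZMod.natCast_val, ZMod.cast_id', id, hj]⟩,
      fun ⟨i, _, hi⟩ => ⟨i, hi⟩⟩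
  · intro e
    simp only [mem_image, mem_range, cycleEdges, Multiset.mem_toFinset, Multiset.mem_map,
      mem_val, mem_univ, true_and]
    rintro ⟨i, -, rfl⟩
    exact ⟨i, by push_cast; rfl⟩

theorem count_cycleEdges_eq_two {s : ℕ} [NeZero (2 * s)] {w : ZMod (2 * s) → α}
    (hw : Nat.card (Set.range w) = s + 1)
    (h1 : ∀ e ∈ cycleEdges w, (cycleEdges w).count e ≠ 1) :
    ∀ e ∈ cycleEdges w, (cycleEdges w).count e = 2 := by
  refine Multiset.count_eq_two_of_two_le_count
    (fun e he => by have := Multiset.count_pos.mpr he; have := h1 e he; omega) ?_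
  have hcard : Multiset.card (cycleEdges w) = 2 * s := by simp [cycleEdges]
  have hvert := card_image_le_card_cycleEdges_add_one w
  rw [← Set.toFinset_range, ← Nat.card_eq_card_toFinset, hw] at hvert
  omega

end Walks

namespace BinaryTree

/- `node l r` encodes a plane tree by first child and next sibling: `l` hangs below a new child `k`
of `u`, and `r` carries the remaining children of `u`. The list `contour t u k` holds the vertices
reached, after `u`, by the depth-first walk around this forest, its new vertices being labelled
`k, k + 1, …` in order of discovery. -/
def contour : BinaryTree Unit → ℕ → ℕ → List ℕ
  | nil, _, _ => []
  | node _ l r, u, k => k :: (contour l k (k + 1) ++ u :: contour r u (k + 1 + l.numNodes))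

def contourEdges : BinaryTree Unit → ℕ → ℕ → Multiset (Sym2 ℕ)
  | nil, _, _ => 0
  | node _ l r, u, k =>
    s(u, k) ::ₘ (contourEdges l k (k + 1) + contourEdges r u (k + 1 + l.numNodes))

variable {t : BinaryTree Unit} {u k : ℕ}

theorem length_contour (t : BinaryTree Unit) (u k : ℕ) :
    (contour t u k).length = 2 * t.numNodes := by
  induction t generalizing u k with
  | nil => rfl
  | node _ l r hl hr =>
    simp only [contour, List.length_cons, List.length_append, hl, hr, numNodes]
    ring

theorem mem_cons_contour {x : ℕ} :
    x ∈ u :: contour t u k ↔ x = u ∨ k ≤ x ∧ x < k + t.numNodes := by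
  induction t generalizing u k with
  | nil => simp [contour]
  | node _ l r hl hr =>
    have hl' := @hl k (k + 1)
    have hr' := @hr u (k + 1 + l.numNodes)
    simp only [List.mem_cons] at hl' hr'
    simp only [contour, List.mem_cons, List.mem_append, numNodes]
    by_cases hp : x ∈ contour l k (k + 1) <;>
      by_cases hq : x ∈ contour r u (k + 1 + l.numNodes) <;>
      simp only [hp, hq, true_or, or_true, or_false, false_or, true_iff] at hl' hr' ⊢ <;> omega

theorem exists_cons_contour_eq_append_singleton (t : BinaryTree Unit) (u k : ℕ) :
    ∃ L, u :: contour t u k = L ++ [u] := by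
  induction t generalizing u k with
  | nil => exact ⟨[], rfl⟩
  | node _ l r _ hr =>
    obtain ⟨L, hL⟩ := hr u (k + 1 + l.numNodes)
    exact ⟨u :: k :: (contour l k (k + 1) ++ L), by simp [contour, hL]⟩

theorem pathEdges_contour_append (t : BinaryTree Unit) (u k : ℕ) (B : List ℕ) :
    (pathEdges u (contour t u k ++ B) : Multiset (Sym2 ℕ)) =
      contourEdges t u k + contourEdges t u k + pathEdges u B := by
  induction t generalizing u k B with
  | nil => simp [contour, contourEdges]
  | node _ l r hl hr =>
    simp only [contour, List.cons_append, List.append_assoc, pathEdges, ← Multiset.cons_coe,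
      hl, hr, contourEdges, Sym2.eq_swap (a := k), ← Multiset.singleton_add]
    abel

variable {β : Type*}

theorem apply_notMem_map_contour_left {l r : BinaryTree Unit} {g : ℕ → β} (huk : u < k)
    (hg : Set.InjOn g (insert u (Set.Ico k (k + (node () l r).numNodes)))) :
    g u ∉ (contour l k (k + 1)).map g := by
  simp only [List.mem_map, not_exists, not_and]
  intro x hx hgx
  have hxk : k ≤ x ∧ x < k + (node () l r).numNodes := by
    have := mem_cons_contour.mp (List.mem_cons_of_mem k hx)
    simp only [numNodes]
    omega
  have := hg (Set.mem_insert_of_mem u hxk) (Set.mem_insert u _) hgx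
  omega

theorem eq_of_map_contour_eq {t t' : BinaryTree Unit} {g g' : ℕ → β} (huk : u < k)
    (hg : Set.InjOn g (insert u (Set.Ico k (k + t.numNodes))))
    (hg' : Set.InjOn g' (insert u (Set.Ico k (k + t'.numNodes))))
    (hu : g u = g' u) (h : (contour t u k).map g = (contour t' u k).map g') : t = t' := by
  induction t generalizing t' u k with
  | nil => cases t' <;> simp_all [contour]
  | node _ l r hl hr =>
    cases t' with
    | nil => simp [contour] at h
    | node _ l' r' =>
      simp only [contour, List.map_cons, List.map_append, List.cons.injEq] at h
      obtain ⟨hk, h⟩ := h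
      rw [hu] at h
      obtain ⟨hl', hr'⟩ := List.append_cons_inj_of_notMem_left
        (hu ▸ apply_notMem_map_contour_left huk hg) (apply_notMem_map_contour_left huk hg') h
      obtain rfl : l = l' := by
        refine hl (Nat.lt_succ_self k) (hg.mono ?_) (hg'.mono ?_) hk hl' <;> intro x hx <;>
          simp only [Set.mem_insert_iff, Set.mem_Ico, numNodes] at hx ⊢ <;> omega
      obtain rfl : r = r' := by
        refine hr (by omega) (hg.mono ?_) (hg'.mono ?_) hu hr' <;> intro x hx <;>
          simp only [Set.mem_insert_iff, Set.mem_Ico, numNodes] at hx ⊢ <;> omega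
      rfl

def contourVertex (t : BinaryTree Unit) (i : ℕ) : ℕ := (0 :: contour t 0 1).getD i 0

theorem contourVertex_two_mul {s : ℕ} (ht : t.numNodes = s) :
    contourVertex t (2 * s) = contourVertex t 0 := by
  subst ht
  obtain ⟨L, hL⟩ := exists_cons_contour_eq_append_singleton t 0 1
  have hlen : L.length = 2 * t.numNodes := by
    simpa [length_contour] using (congrArg List.length hL).symm
  rw [contourVertex, hL, List.getD_append_right _ _ _ _ hlen.le, hlen, Nat.sub_self]
  rfl

variable {s n : ℕ}

-- The labels never exceed `s`, so `Fin.ofNat` does not wrap around.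
def contourWalk (t : BinaryTree Unit) (f : Fin (s + 1) ↪ Fin n) : ZMod (2 * s) → Fin n :=
  fun j => f (Fin.ofNat (s + 1) (contourVertex t j.val))

theorem range_contourWalk (ht : t.numNodes = s) (f : Fin (s + 1) ↪ Fin n) :
    Set.range (contourWalk t f) = Set.range f := by
  refine Set.Subset.antisymm (Set.range_subset_iff.mpr fun j => ⟨_, rfl⟩) ?_
  rintro _ ⟨m, rfl⟩
  have hm : m.val ∈ 0 :: contour t 0 1 := mem_cons_contour.mpr (by omega)
  obtain ⟨i, hi, him⟩ := List.mem_iff_getElem.mp hm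
  have hiv : contourVertex t i = m.val := by rw [contourVertex, List.getD_eq_getElem _ _ hi, him]
  have hiv' : contourVertex t (i % (2 * s)) = m.val := by
    simp only [List.length_cons, length_contour, ht] at hi
    rcases Nat.lt_or_eq_of_le (Nat.lt_succ_iff.mp hi) with hi | rfl
    · rwa [Nat.mod_eq_of_lt hi]
    · rw [Nat.mod_self, ← hiv, contourVertex_two_mul ht]
  refine ⟨(i : ZMod (2 * s)), ?_⟩
  simp only [contourWalk, ZMod.val_natCast, hiv', Fin.ofNat_val_eq_self]

theorem injOn_comp_ofNat (f : Fin (s + 1) ↪ Fin n) :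
    Set.InjOn (fun m => f (Fin.ofNat (s + 1) m)) (insert 0 (Set.Ico 1 (1 + s))) := by
  intro x hx y hy hxy
  have := congrArg Fin.val (f.injective hxy)
  simp only [Set.mem_insert_iff, Set.mem_Ico] at hx hy
  rwa [Fin.val_ofNat, Fin.val_ofNat, Nat.mod_eq_of_lt (by omega), Nat.mod_eq_of_lt (by omega)]
    at this

variable [NeZero (2 * s)]

theorem cycleEdges_contourWalk (ht : t.numNodes = s) (f : Fin (s + 1) ↪ Fin n) :
    cycleEdges (contourWalk t f) =
      (contourEdges t 0 1 + contourEdges t 0 1).map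
        (Sym2.map fun m => f (Fin.ofNat (s + 1) m)) := by
  have h := map_range_getD_eq_pathEdges 0 0 (contour t 0 1)
  rw [length_contour, ht] at h
  refine (cycleEdges_eq_map_range (v := fun i => f (Fin.ofNat (s + 1) (contourVertex t i)))
    (congrArg (fun m => f (Fin.ofNat (s + 1) m)) (contourVertex_two_mul ht))).trans ?_
  have hT : contourEdges t 0 1 + contourEdges t 0 1 = pathEdges 0 (contour t 0 1) := by
    simpa [pathEdges] using (pathEdges_contour_append t 0 1 []).symm
  rw [hT, ← h, Multiset.map_coe, List.map_map]
  rfl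

theorem contourWalk_natCast_add_one (ht : t.numNodes = s) (f : Fin (s + 1) ↪ Fin n) {i : ℕ}
    (hi : i < 2 * s) :
    contourWalk t f ((i : ZMod (2 * s)) + 1) =
      f (Fin.ofNat (s + 1) (contourVertex t (i + 1))) := by
  have := ZMod.apply_val_add_one (v := fun i => f (Fin.ofNat (s + 1) (contourVertex t i)))
    (congrArg (fun m => f (Fin.ofNat (s + 1) m)) (contourVertex_two_mul ht)) (i : ZMod (2 * s))
  rwa [ZMod.val_cast_of_lt hi] at this

theorem contourWalk_injective {t t' : BinaryTree Unit} (ht : t.numNodes = s)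
    (ht' : t'.numNodes = s) {f f' : Fin (s + 1) ↪ Fin n}
    (h : contourWalk t f = contourWalk t' f') : t = t' ∧ f = f' := by
  set g : ℕ → Fin n := fun m => f (Fin.ofNat (s + 1) m)
  set g' : ℕ → Fin n := fun m => f' (Fin.ofNat (s + 1) m)
  have h0 : g 0 = g' 0 := by
    have := congrFun h 0
    rw [contourWalk, contourWalk, ZMod.val_zero] at this
    exact this
  have hL : (contour t 0 1).map g = (contour t' 0 1).map g' := by
    refine List.ext_getElem (by simp [length_contour, ht, ht']) fun i hi hi' => ?_
    have hi2 : i < 2 * s := by simpa [length_contour, ht] using hi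
    have := congrFun h ((i : ZMod (2 * s)) + 1)
    rw [contourWalk_natCast_add_one ht f hi2, contourWalk_natCast_add_one ht' f' hi2] at this
    rw [contourVertex, contourVertex, List.getD_cons_succ, List.getD_cons_succ] at this
    rw [List.getElem_map, List.getElem_map, ← List.getD_eq_getElem _ 0,
      ← List.getD_eq_getElem _ 0]
    exact this
  obtain rfl : t = t' := eq_of_map_contour_eq zero_lt_one (by rw [ht]; exact injOn_comp_ofNat f)
    (by rw [ht']; exact injOn_comp_ofNat f') h0 hL
  refine ⟨rfl, DFunLike.ext _ _ fun m => ?_⟩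
  have key : g m.val = g' m.val := by
    rcases List.mem_cons.mp (mem_cons_contour.mpr (by omega) : m.val ∈ 0 :: contour t 0 1)
      with hm | hm
    · rw [hm]
      exact h0
    · exact List.map_eq_map_iff.mp hL _ hm
  simpa [g, g', Fin.ofNat_val_eq_self] using key

end BinaryTree

theorem sigCheck_le {σ : ℕ → ℝ} {n i : ℕ} (hi : 1 ≤ i) (hin : i ≤ n) : sigCheck σ n ≤ σ i :=
  csInf_le ((Set.finite_Icc 1 n).image σ).bddBelow ⟨i, ⟨hi, hin⟩, rfl⟩

theorem sigCheck_nonneg {σ : ℕ → ℝ} {n : ℕ} (hσ : ∀ i, 1 ≤ i → 0 < σ i) : 0 ≤ sigCheck σ n :=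
  Real.sInf_nonneg (by rintro _ ⟨i, ⟨hi, -⟩, rfl⟩; exact (hσ i hi).le)

def edgeIndex (n : ℕ) : Sym2 (Fin n) → {q : ℕ × ℕ // 1 ≤ q.1 ∧ q.1 ≤ q.2} :=
  Sym2.lift ⟨fun u v => ⟨(min u.1 v.1 + 1, max u.1 v.1 + 1), by omega, by omega⟩,
    fun u v => by simp only [min_comm, max_comm]⟩

def edgeVar {Ω : Type} {n : ℕ} (a : ℕ → ℕ → Ω → ℝ) (e : Sym2 (Fin n)) : Ω → ℝ :=
  a (edgeIndex n e).1.1 (edgeIndex n e).1.2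

noncomputable def walkMoment {Ω : Type} [MeasurableSpace Ω] (P : Measure Ω) (a : ℕ → ℕ → Ω → ℝ)
    {k n : ℕ} [NeZero k] (w : ZMod k → Fin n) : ℝ :=
  ∫ ω, ∏ j : ZMod k, a ((w j).1 + 1) ((w (j + 1)).1 + 1) ω ∂P

section Ensemble

variable {Ω : Type} {a : ℕ → ℕ → Ω → ℝ} {n : ℕ}

theorem edgeIndex_injective : Function.Injective (edgeIndex n) := by
  intro e e' h
  induction e using Sym2.ind with | _ u v => ?_
  induction e' using Sym2.ind with | _ u' v' => ?_
  simp only [edgeIndex, Sym2.lift_mk, Subtype.mk.injEq, Prod.mk.injEq] at h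
  rw [Sym2.eq_iff, Fin.ext_iff, Fin.ext_iff, Fin.ext_iff, Fin.ext_iff]
  omega

theorem edgeIndex_snd_le (e : Sym2 (Fin n)) : (edgeIndex n e).1.2 ≤ n := by
  induction e using Sym2.ind with | _ u v => ?_
  simp only [edgeIndex, Sym2.lift_mk]
  omega

theorem apply_eq_edgeVar (hsymm : ∀ i j, a i j = a j i) (u v : Fin n) :
    a (u.1 + 1) (v.1 + 1) = edgeVar a s(u, v) := by
  rcases le_total u.1 v.1 with h | h
  · simp [edgeVar, edgeIndex, h]
  · simp [edgeVar, edgeIndex, h, hsymm (u.1 + 1)]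

variable [MeasurableSpace Ω] {P : Measure Ω} {σ : ℕ → ℝ}

theorem integral_edgeVar (hmean : ∀ i j, 1 ≤ i → 1 ≤ j → ∫ ω, a i j ω ∂P = 0)
    (e : Sym2 (Fin n)) : ∫ ω, edgeVar a e ω ∂P = 0 :=
  hmean _ _ (edgeIndex n e).2.1 ((edgeIndex n e).2.1.trans (edgeIndex n e).2.2)

theorem integral_edgeVar_sq
    (hvar : ∀ i j, 1 ≤ i → 1 ≤ j → ∫ ω, (a i j ω) ^ 2 ∂P = σ i * σ j) (e : Sym2 (Fin n)) :
    ∫ ω, edgeVar a e ω ^ 2 ∂P = σ (edgeIndex n e).1.1 * σ (edgeIndex n e).1.2 :=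
  hvar _ _ (edgeIndex n e).2.1 ((edgeIndex n e).2.1.trans (edgeIndex n e).2.2)

theorem walkMoment_eq_prod (hmeas : ∀ i j, Measurable (a i j)) (hsymm : ∀ i j, a i j = a j i)
    (hindep : iIndepFun
      (fun q : {q : ℕ × ℕ // 1 ≤ q.1 ∧ q.1 ≤ q.2} => a q.1.1 q.1.2) P)
    {k : ℕ} [NeZero k] (w : ZMod k → Fin n) :
    walkMoment P a w =
      ∏ e ∈ (cycleEdges w).toFinset, ∫ ω, edgeVar a e ω ^ (cycleEdges w).count e ∂P := by
  have hprod : ∀ ω, ∏ j : ZMod k, a ((w j).1 + 1) ((w (j + 1)).1 + 1) ω =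
      ((cycleEdges w).map (edgeVar a · ω)).prod := by
    intro ω
    simp only [cycleEdges, Multiset.map_map, Function.comp_def, ← apply_eq_edgeVar hsymm]
    rfl
  simp_rw [walkMoment, hprod]
  exact (hindep.precomp edgeIndex_injective).integral_multiset_prod_map (fun e => hmeas _ _) _

variable {s : ℕ} [NeZero (2 * s)]

theorem walkMoment_nonneg (hmeas : ∀ i j, Measurable (a i j)) (hsymm : ∀ i j, a i j = a j i)
    (hindep : iIndepFun
      (fun q : {q : ℕ × ℕ // 1 ≤ q.1 ∧ q.1 ≤ q.2} => a q.1.1 q.1.2) P)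
    (hmean : ∀ i j, 1 ≤ i → 1 ≤ j → ∫ ω, a i j ω ∂P = 0)
    {w : ZMod (2 * s) → Fin n} (hw : w ∈ Wset (2 * s) n (s + 1)) : 0 ≤ walkMoment P a w := by
  rw [walkMoment_eq_prod hmeas hsymm hindep]
  by_cases h1 : ∃ e ∈ cycleEdges w, (cycleEdges w).count e = 1
  · obtain ⟨e, he, he1⟩ := h1
    refine (prod_eq_zero (Multiset.mem_toFinset.mpr he) ?_).ge
    simpa only [he1, pow_one] using integral_edgeVar hmean e
  · push Not at h1
    have h2 := count_cycleEdges_eq_two hw h1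
    refine prod_nonneg fun e he => ?_
    rw [h2 e (Multiset.mem_toFinset.mp he)]
    exact integral_nonneg fun ω => sq_nonneg _

theorem sigCheck_pow_le_walkMoment_contourWalk (hmeas : ∀ i j, Measurable (a i j))
    (hsymm : ∀ i j, a i j = a j i)
    (hindep : iIndepFun
      (fun q : {q : ℕ × ℕ // 1 ≤ q.1 ∧ q.1 ≤ q.2} => a q.1.1 q.1.2) P)
    (hvar : ∀ i j, 1 ≤ i → 1 ≤ j → ∫ ω, (a i j ω) ^ 2 ∂P = σ i * σ j)
    (hσ : ∀ i, 1 ≤ i → 0 < σ i) {t : BinaryTree Unit} (ht : t.numNodes = s)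
    (f : Fin (s + 1) ↪ Fin n) :
    sigCheck σ n ^ (2 * s) ≤ walkMoment P a (t.contourWalk f) := by
  set M := cycleEdges (t.contourWalk f)
  have hrange : Nat.card (Set.range (t.contourWalk f)) = s + 1 := by
    rw [BinaryTree.range_contourWalk ht, Nat.card_range_of_injective f.injective, Nat.card_fin]
  have h2 : ∀ e ∈ M, M.count e = 2 := by
    refine count_cycleEdges_eq_two hrange fun e _ => ?_
    rw [BinaryTree.cycleEdges_contourWalk ht, Multiset.map_add, Multiset.count_add]
    omega
  have hcard : M.toFinset.card = s := by
    have hsum := Multiset.toFinset_sum_count_eq M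
    rw [sum_congr rfl fun e he => h2 e (Multiset.mem_toFinset.mp he), sum_const, smul_eq_mul]
      at hsum
    have : Multiset.card M = 2 * s := by simp [M, cycleEdges]
    omega
  have hσ0 := sigCheck_nonneg (n := n) hσ
  rw [walkMoment_eq_prod hmeas hsymm hindep]
  calc sigCheck σ n ^ (2 * s) = ∏ _e ∈ M.toFinset, sigCheck σ n * sigCheck σ n := by
        rw [prod_const, hcard, ← sq, ← pow_mul, mul_comm]
    _ ≤ ∏ e ∈ M.toFinset, ∫ ω, edgeVar a e ω ^ M.count e ∂P := by
        refine prod_le_prod (fun _ _ => mul_nonneg hσ0 hσ0) fun e he => ?_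
        have hle := edgeIndex_snd_le e
        have h12 := (edgeIndex n e).2
        rw [h2 e (Multiset.mem_toFinset.mp he), integral_edgeVar_sq hvar]
        exact mul_le_mul (sigCheck_le h12.1 (by omega)) (sigCheck_le (by omega) hle) hσ0
          (hσ _ (by omega)).le

open Classical in
theorem muW_two_mul_eq (hk : 2 * s ≠ 0) :
    muW P a (2 * s) (s + 1) n hk = ((n : ℝ) ^ (s + 1))⁻¹ *
      ∑ w : ZMod (2 * s) → Fin n, if w ∈ Wset (2 * s) n (s + 1) then walkMoment P a w else 0 := by
  rw [muW, show -(((2 * s : ℕ) : ℝ) / 2 + 1) = -((s + 1 : ℕ) : ℝ) by push_cast; ring,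
    Real.rpow_neg n.cast_nonneg, Real.rpow_natCast]
  rfl

open Classical in
theorem catalan_mul_descFactorial_mul_le_sum_walkMoment (hmeas : ∀ i j, Measurable (a i j))
    (hsymm : ∀ i j, a i j = a j i)
    (hindep : iIndepFun
      (fun q : {q : ℕ × ℕ // 1 ≤ q.1 ∧ q.1 ≤ q.2} => a q.1.1 q.1.2) P)
    (hmean : ∀ i j, 1 ≤ i → 1 ≤ j → ∫ ω, a i j ω ∂P = 0)
    (hvar : ∀ i j, 1 ≤ i → 1 ≤ j → ∫ ω, (a i j ω) ^ 2 ∂P = σ i * σ j)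
    (hσ : ∀ i, 1 ≤ i → 0 < σ i) :
    ((catalan s * n.descFactorial (s + 1) : ℕ) : ℝ) * sigCheck σ n ^ (2 * s) ≤
      ∑ w : ZMod (2 * s) → Fin n, if w ∈ Wset (2 * s) n (s + 1) then walkMoment P a w else 0 := by
  set D := BinaryTree.treesOfNumNodesEq s ×ˢ (univ : Finset (Fin (s + 1) ↪ Fin n))
  have hD : D.card = catalan s * n.descFactorial (s + 1) := by
    rw [card_product, BinaryTree.treesOfNumNodesEq_card_eq_catalan, card_univ,
      Fintype.card_embedding_eq, Fintype.card_fin, Fintype.card_fin]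
  have hnodes : ∀ x ∈ D, x.1.numNodes = s := fun x hx =>
    BinaryTree.mem_treesOfNumNodesEq.mp (mem_product.mp hx).1
  have hinj : Set.InjOn (fun x : BinaryTree Unit × (Fin (s + 1) ↪ Fin n) => x.1.contourWalk x.2)
      D := by
    rintro ⟨t, f⟩ htf ⟨t', f'⟩ htf' h
    obtain ⟨rfl, rfl⟩ := BinaryTree.contourWalk_injective (hnodes _ htf) (hnodes _ htf') h
    rfl
  have hW : ∀ x ∈ D, x.1.contourWalk x.2 ∈ Wset (2 * s) n (s + 1) := fun x hx => by
    change Nat.card _ = _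
    rw [BinaryTree.range_contourWalk (hnodes x hx),
      Nat.card_range_of_injective x.2.injective, Nat.card_fin]
  calc ((catalan s * n.descFactorial (s + 1) : ℕ) : ℝ) * sigCheck σ n ^ (2 * s)
      = D.card • sigCheck σ n ^ (2 * s) := by rw [hD, nsmul_eq_mul]
    _ ≤ ∑ x ∈ D, walkMoment P a (x.1.contourWalk x.2) :=
        card_nsmul_le_sum _ _ _ fun x hx => sigCheck_pow_le_walkMoment_contourWalk hmeas hsymm
          hindep hvar hσ (hnodes x hx) x.2
    _ = ∑ w ∈ D.image fun x => x.1.contourWalk x.2,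
          if w ∈ Wset (2 * s) n (s + 1) then walkMoment P a w else 0 := by
        rw [sum_image hinj]
        exact sum_congr rfl fun x hx => (if_pos (hW x hx)).symm
    _ ≤ _ := by
        refine sum_le_sum_of_subset_of_nonneg (subset_univ _) fun w _ _ => ?_
        split_ifs with hw
        · exact walkMoment_nonneg hmeas hsymm hindep hmean hw
        · exact le_rfl

end Ensemble

/-- **Lower bound for the dominant term**: for `n ≥ s + 1`,
`μ_{2s,s+1} ≥ ((n−s)/n)^{s+1}·C_s·σ̌_n^{2s}`. -/
theorem mu_dominant_lower_bound {Ω : Type} [MeasurableSpace Ω]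
    (P : Measure Ω)
    (σ : ℕ → ℝ) (hσpos : ∀ i, 1 ≤ i → 0 < σ i)
    (a : ℕ → ℕ → Ω → ℝ)
    (hmeas : ∀ i j, Measurable (a i j))
    (hsymm : ∀ i j, a i j = a j i)
    (hindep : iIndepFun
      (fun q : {q : ℕ × ℕ // 1 ≤ q.1 ∧ q.1 ≤ q.2} => a q.1.1 q.1.2) P)
    (hmean : ∀ i j, 1 ≤ i → 1 ≤ j → ∫ ω, a i j ω ∂P = 0)
    (hvar : ∀ i j, 1 ≤ i → 1 ≤ j → ∫ ω, (a i j ω) ^ 2 ∂P = σ i * σ j)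
    (s : ℕ) (hs : 1 ≤ s) (n : ℕ) (hn : s + 1 ≤ n) :
    muW P a (2 * s) (s + 1) n (by omega) ≥
      (((n : ℝ) - s) / n) ^ (s + 1) * (catalan s : ℝ) * sigCheck σ n ^ (2 * s) := by
  have : NeZero (2 * s) := ⟨by omega⟩
  have hsum := catalan_mul_descFactorial_mul_le_sum_walkMoment hmeas hsymm hindep hmean hvar hσpos
    (n := n) (s := s)
  have hdesc : ((n : ℝ) - s) ^ (s + 1) ≤ n.descFactorial (s + 1) := by
    rw [← Nat.cast_sub (by omega), ← Nat.cast_pow, Nat.cast_le]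
    simpa using Nat.pow_sub_le_descFactorial n (s + 1)
  have hσ : 0 ≤ sigCheck σ n ^ (2 * s) := pow_nonneg (sigCheck_nonneg hσpos) _
  rw [muW_two_mul_eq, ge_iff_le]
  calc (((n : ℝ) - s) / n) ^ (s + 1) * (catalan s : ℝ) * sigCheck σ n ^ (2 * s)
      = ((n : ℝ) ^ (s + 1))⁻¹ * (catalan s * ((n : ℝ) - s) ^ (s + 1) * sigCheck σ n ^ (2 * s)) := by
        rw [div_pow]
        ring
    _ ≤ ((n : ℝ) ^ (s + 1))⁻¹ *
          (((catalan s * n.descFactorial (s + 1) : ℕ) : ℝ) * sigCheck σ n ^ (2 * s)) := by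
        push_cast
        gcongr
    _ ≤ _ := by gcongr
end
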